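/- arXiv:1312.0247 — 7 statements merged into one kernel-verified Lean document; each statement's English description precedes it below -/
import Mathlib

section
/- If a and b are selfadjoint elements of a C*-algebra with ‖a‖ ≤ m, ‖b‖ ≤ m, m ≥ 1, ‖a - b‖ < δ, and δ ≤ 1, then the positive parts satisfy ‖a⁺ - b⁺‖ < 2·(log(16m))·√δ, where x⁺ = (x + |x|)/2. -/
/-!
Since `a⁺ - b⁺ = ((a - b) + (|a| - |b|)) / 2`, it suffices to bound `‖|a| - |b|‖`. With
`d = ‖a - b‖ ≤ 1`, Kato's inequality gives at most `(2/π) (2 + log (2m) - log d) d`, and the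
only term that is not `O(d)` is `-d log d ≤ 2 √d`; together with `d ≤ √d` everything is a
multiple of `√d < √δ`.
-/

/-- For a selfadjoint element `x` of a C*-algebra, `|x| = √(x²)` is given by the
continuous functional calculus applied to `t ↦ |t|`, and the positive part is
`x⁺ = (x + |x|)/2`. -/
noncomputable def cstarAbs {A : Type*} [CStarAlgebra A] (x : A) : A :=
  cfc (fun t : ℝ => |t|) x

noncomputable def cstarPosPart {A : Type*} [CStarAlgebra A] (x : A) : A :=
  (2 : ℂ)⁻¹ • (x + cstarAbs x)

open Real

lemma neg_log_mul_self_le_two_sqrt {x : ℝ} (hx : 0 ≤ x) : -log x * x ≤ 2 * √x := by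
  rcases hx.eq_or_lt with rfl | hx
  · simp
  have hsqrt : 0 < √x := sqrt_pos.mpr hx
  have hlog : -log x / 2 ≤ (√x)⁻¹ := by
    have := log_le_sub_one_of_pos (inv_pos.mpr hsqrt)
    rw [log_inv, log_sqrt hx.le] at this
    linarith
  calc -log x * x = 2 * (-log x / 2) * x := by ring
    _ ≤ 2 * (√x)⁻¹ * x := by gcongr
    _ = 2 * √x := by rw [mul_assoc, inv_mul_eq_div, div_sqrt]

lemma two_div_pi_mul_two_add_log_div_mul_le {s d M : ℝ} (hd : 0 ≤ d) (hds : d ≤ s)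
    (hs : s ≤ M) (hM : 1 ≤ M) (hd1 : d ≤ 1) :
    2 / π * (2 + log (s / d)) * d ≤ 2 / 3 * (4 + log M) * √d := by
  rcases hd.eq_or_lt with rfl | hd
  · simp
  have hlogM : 0 ≤ log M := log_nonneg hM
  have hlog : log (s / d) ≤ log M - log d := by
    rw [← log_div (by linarith) hd.ne']
    gcongr
    exact div_pos (hd.trans_le hds) hd
  have hd_sqrt : d ≤ √d := le_sqrt_self_iff.mpr hd1
  have hmain : (2 + log (s / d)) * d ≤ (4 + log M) * √d :=
    calc (2 + log (s / d)) * d ≤ (2 + log M) * d + -log d * d := by nlinarith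
      _ ≤ (2 + log M) * √d + 2 * √d :=
          add_le_add (by gcongr) (neg_log_mul_self_le_two_sqrt hd.le)
      _ = (4 + log M) * √d := by ring
  have hπ : 2 / π ≤ 2 / 3 := by gcongr; exact pi_gt_three.le
  have hpos : 0 ≤ (2 + log (s / d)) * d := by
    have : 0 ≤ log (s / d) := log_nonneg ((one_le_div hd).mpr hds)
    positivity
  calc 2 / π * (2 + log (s / d)) * d = 2 / π * ((2 + log (s / d)) * d) := by ring
    _ ≤ 2 / 3 * ((4 + log M) * √d) := by gcongr
    _ = 2 / 3 * (4 + log M) * √d := by ring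

lemma two_inv_mul_add_log_lt_two_mul_log_sixteen_mul {m : ℝ} (hm : 1 ≤ m) :
    2⁻¹ * (1 + 2 / 3 * (4 + log (2 * m))) < 2 * log (16 * m) := by
  have hm0 : 0 < m := by linarith
  rw [log_mul two_ne_zero hm0.ne', log_mul (by norm_num) hm0.ne',
    show (16 : ℝ) = 2 ^ 4 by norm_num, log_pow]
  have := log_two_gt_d9
  have := log_nonneg hm
  push_cast
  linarith

lemma norm_cstarPosPart_sub_le {A : Type*} [CStarAlgebra A] (a b : A) :
    ‖cstarPosPart a - cstarPosPart b‖ ≤ 2⁻¹ * (‖a - b‖ + ‖cstarAbs a - cstarAbs b‖) := by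
  have : cstarPosPart a - cstarPosPart b =
      (2 : ℂ)⁻¹ • ((a - b) + (cstarAbs a - cstarAbs b)) := by
    simp only [cstarPosPart, ← smul_sub]
    abel_nf
  rw [this, norm_smul]
  norm_num
  exact norm_add_le _ _

theorem stmt_0_general {A : Type*} [CStarAlgebra A]
    (a b : A)
    (m δ : ℝ) (hm : 1 ≤ m) (hna : ‖a‖ ≤ m) (hnb : ‖b‖ ≤ m)
    (hab : ‖a - b‖ < δ) (hδ : δ ≤ 1)
    (hKato : ‖cstarAbs a - cstarAbs b‖ ≤
      (2 / Real.pi) * (2 + Real.log ((‖a‖ + ‖b‖) / ‖a - b‖)) * ‖a - b‖) :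
    ‖cstarPosPart a - cstarPosPart b‖ < 2 * Real.log (16 * m) * Real.sqrt δ := by
  set d := ‖a - b‖
  have hd1 : d ≤ 1 := hab.le.trans hδ
  have hd_sqrt : d ≤ √d := le_sqrt_self_iff.mpr hd1
  have hsqrt : √d < √δ := sqrt_lt_sqrt (norm_nonneg _) hab
  have habs : ‖cstarAbs a - cstarAbs b‖ ≤ 2 / 3 * (4 + log (2 * m)) * √d :=
    hKato.trans <| two_div_pi_mul_two_add_log_div_mul_le (norm_nonneg _) (norm_sub_le a b)
      (by linarith) (by linarith) hd1
  have hc : 0 ≤ 2⁻¹ * (1 + 2 / 3 * (4 + log (2 * m))) := by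
    have := log_nonneg (show 1 ≤ 2 * m by linarith)
    positivity
  calc ‖cstarPosPart a - cstarPosPart b‖ ≤ 2⁻¹ * (d + ‖cstarAbs a - cstarAbs b‖) :=
        norm_cstarPosPart_sub_le a b
    _ ≤ 2⁻¹ * (√d + 2 / 3 * (4 + log (2 * m)) * √d) := by gcongr
    _ = 2⁻¹ * (1 + 2 / 3 * (4 + log (2 * m))) * √d := by ring
    _ ≤ 2⁻¹ * (1 + 2 / 3 * (4 + log (2 * m))) * √δ := by gcongr
    _ < 2 * log (16 * m) * √δ :=
        mul_lt_mul_of_pos_right (two_inv_mul_add_log_lt_two_mul_log_sixteen_mul hm)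
          ((sqrt_nonneg d).trans_lt hsqrt)

/-- If `a`, `b` are selfadjoint, `‖a‖ ≤ m`, `‖b‖ ≤ m`, `m ≥ 1`, `‖a - b‖ < δ`, `δ ≤ 1`,
then (granting Kato's inequality) `‖a⁺ - b⁺‖ < 2 · log(16m) · √δ`. -/
theorem stmt_0 {A : Type*} [CStarAlgebra A]
    (a b : A) (ha : IsSelfAdjoint a) (hb : IsSelfAdjoint b)
    (m δ : ℝ) (hm : 1 ≤ m) (hna : ‖a‖ ≤ m) (hnb : ‖b‖ ≤ m)
    (hab : ‖a - b‖ < δ) (hδ : δ ≤ 1)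
    (hKato : ‖cstarAbs a - cstarAbs b‖ ≤
      (2 / Real.pi) * (2 + Real.log ((‖a‖ + ‖b‖) / ‖a - b‖)) * ‖a - b‖) :
    ‖cstarPosPart a - cstarPosPart b‖ < 2 * Real.log (16 * m) * Real.sqrt δ :=
  stmt_0_general a b m δ hm hna hnb hab hδ hKato
end

section
/- If a and b are selfadjoint elements of a C*-algebra with a ≠ b, then ‖|a| - |b|‖ ≤ (2/π)·(2 + log((‖a‖ + ‖b‖)/‖a - b‖))·‖a - b‖. -/
open Real Set MeasureTheory intervalIntegral

lemma Real.arctan_le_self {u : ℝ} (hu : 0 ≤ u) : arctan u ≤ u := by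
  simpa only [tan_arctan] using le_tan (arctan_nonneg.2 hu) (arctan_lt_pi_div_two u)

lemma sq_div_sq_add_sq_mem_Icc (s t : ℝ) : s ^ 2 / (s ^ 2 + t ^ 2) ∈ Icc 0 1 :=
  ⟨by positivity, div_le_one_of_le₀ (le_add_of_nonneg_right (sq_nonneg t)) (by positivity)⟩

lemma norm_sq_div_sq_add_sq_le_one (s t : ℝ) : ‖s ^ 2 / (s ^ 2 + t ^ 2)‖ ≤ 1 := by
  have := sq_div_sq_add_sq_mem_Icc s t
  rw [Real.norm_eq_abs, abs_of_nonneg this.1]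
  exact this.2

lemma abs_div_sq_add_sq_le {t : ℝ} (ht : 0 < t) (s : ℝ) : |s / (s ^ 2 + t ^ 2)| ≤ (2 * t)⁻¹ := by
  rw [abs_div, abs_of_pos (by positivity : 0 < s ^ 2 + t ^ 2), div_le_iff₀ (by positivity),
    ← div_eq_inv_mul, le_div_iff₀ (by positivity)]
  nlinarith [sq_nonneg (|s| - t), sq_abs s]

lemma continuous_inv_sq_add_sq {t : ℝ} (ht : t ≠ 0) :
    Continuous fun s : ℝ => (s ^ 2 + t ^ 2)⁻¹ :=
  (by fun_prop : Continuous fun s : ℝ => s ^ 2 + t ^ 2).inv₀ fun s => by positivity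

lemma integral_sq_div_sq_add_sq (s ε T : ℝ) :
    ∫ t in ε..T, s ^ 2 / (s ^ 2 + t ^ 2) = |s| * (arctan (T / |s|) - arctan (ε / |s|)) := by
  rw [← integral_div_sq_add_sq, ← intervalIntegral.integral_const_mul]
  congr 1 with t
  rw [sq_abs, mul_div_assoc', ← sq, sq_abs]

/-- A truncation of `|s| = (2/π) ∫₀^∞ s²/(s² + t²) dt`. -/
noncomputable def truncAbs (ε T s : ℝ) : ℝ := 2 / π * ∫ t in ε..T, s ^ 2 / (s ^ 2 + t ^ 2)

lemma abs_abs_sub_truncAbs_le (s : ℝ) {ε T : ℝ} (hε : 0 < ε) (hT : 0 < T) :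
    |(|s| - truncAbs ε T s)| ≤ 2 / π * (ε + s ^ 2 / T) := by
  rcases eq_or_ne s 0 with rfl | hs
  · have h0 : truncAbs ε T 0 = 0 := by simp [truncAbs]
    rw [h0, abs_zero, sub_zero, abs_zero]
    positivity
  have hc : 0 < |s| := abs_pos.2 hs
  have hT' : arctan (T / |s|) = π / 2 - arctan (|s| / T) := by
    rw [← arctan_inv_of_pos (div_pos hc hT), inv_div]
  have key : |s| - truncAbs ε T s = 2 / π * (|s| * (arctan (|s| / T) + arctan (ε / |s|))) := by
    rw [truncAbs, integral_sq_div_sq_add_sq, hT']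
    field_simp
    ring
  have h₁ := arctan_nonneg.2 (div_nonneg hc.le hT.le)
  have h₂ := arctan_nonneg.2 (div_nonneg hε.le hc.le)
  rw [key, abs_of_nonneg (by positivity)]
  gcongr
  calc |s| * (arctan (|s| / T) + arctan (ε / |s|)) ≤ |s| * (|s| / T + ε / |s|) := by
        gcongr <;> exact arctan_le_self (by positivity)
    _ = ε + s ^ 2 / T := by field_simp; rw [sq_abs]; ring

lemma continuous_integral_sq_div_sq_add_sq {ε T : ℝ} (hε : 0 < ε) (hT : ε ≤ T) :
    Continuous fun s : ℝ => ∫ t in ε..T, s ^ 2 / (s ^ 2 + t ^ 2) := by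
  refine continuous_of_dominated_interval
    (bound := fun _ => 1) (fun s => ?_) (fun s => .of_forall fun t _ => ?_)
    intervalIntegrable_const (.of_forall fun t ht => ?_)
  · exact (by fun_prop : Measurable _).aestronglyMeasurable
  · exact norm_sq_div_sq_add_sq_le_one s t
  · rw [uIoc_of_le hT] at ht
    have : 0 < t := hε.trans ht.1
    exact continuous_id.pow 2 |>.div (by fun_prop) fun s => by positivity

lemma continuous_truncAbs {ε T : ℝ} (hε : 0 < ε) (hT : ε ≤ T) : Continuous (truncAbs ε T) :=
  continuous_const.mul (continuous_integral_sq_div_sq_add_sq hε hT)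

section IntervalIntegral

variable {E : Type*} [NormedAddCommGroup E] [NormedSpace ℝ E] {f : ℝ → E}

lemma norm_intervalIntegral_le_mul_log {δ M C : ℝ} (hδ : 0 < δ) (hδM : δ ≤ M)
    (hf : ∀ t, δ < t → ‖f t‖ ≤ C / t) : ‖∫ t in δ..M, f t‖ ≤ C * log (M / δ) := by
  have hint : IntervalIntegrable (fun t : ℝ => C * t⁻¹) volume δ M :=
    (continuousOn_const.mul (continuousOn_inv₀.mono fun t ht => by
      rw [uIcc_of_le hδM] at ht; exact (hδ.trans_le ht.1).ne')).intervalIntegrable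
  calc ‖∫ t in δ..M, f t‖ ≤ ∫ t in δ..M, C * t⁻¹ :=
        norm_integral_le_of_norm_le hδM (.of_forall fun t ht => (hf t ht.1).trans_eq
          (div_eq_mul_inv _ _)) hint
    _ = C * log (M / δ) := by
      rw [intervalIntegral.integral_const_mul, integral_inv_of_pos hδ (hδ.trans_le hδM)]

lemma norm_intervalIntegral_le_div_sq {M T C : ℝ} (hM : 0 < M) (hMT : M ≤ T)
    (hf : ∀ t, M < t → ‖f t‖ ≤ C / t ^ 2) : ‖∫ t in M..T, f t‖ ≤ C * (M⁻¹ - T⁻¹) := by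
  have hderiv : ∀ t ∈ uIcc M T, HasDerivAt (fun u : ℝ => -C * u⁻¹) (C / t ^ 2) t := by
    intro t ht
    rw [uIcc_of_le hMT] at ht
    exact ((hasDerivAt_inv (hM.trans_le ht.1).ne').const_mul (-C)).congr_deriv (by ring)
  have hint : IntervalIntegrable (fun t : ℝ => C / t ^ 2) volume M T :=
    (continuousOn_const.div (by fun_prop) fun t ht => by
      rw [uIcc_of_le hMT] at ht; have := hM.trans_le ht.1; positivity).intervalIntegrable
  calc ‖∫ t in M..T, f t‖ ≤ ∫ t in M..T, C / t ^ 2 :=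
        norm_integral_le_of_norm_le hMT (.of_forall fun t ht => hf t ht.1) hint
    _ = C * (M⁻¹ - T⁻¹) := by rw [integral_eq_sub_of_hasDerivAt hderiv hint]; ring

/-- The bound `min (1, δ / t, M δ / t²)` has integral `(2 + log (M / δ)) δ` over `(0, ∞)`. -/
lemma norm_intervalIntegral_le_of_norm_le_min {ε δ M T : ℝ} (hε : 0 < ε) (hεδ : ε ≤ δ)
    (hδM : δ ≤ M) (hMT : M ≤ T) (hf : IntervalIntegrable f volume ε T)
    (h₁ : ∀ t, 0 < t → ‖f t‖ ≤ 1) (h₂ : ∀ t, 0 < t → ‖f t‖ ≤ δ / t)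
    (h₃ : ∀ t, 0 < t → ‖f t‖ ≤ M * δ / t ^ 2) :
    ‖∫ t in ε..T, f t‖ ≤ (2 + log (M / δ)) * δ := by
  have hδ : 0 < δ := hε.trans_le hεδ
  have hM : 0 < M := hδ.trans_le hδM
  have hi {u v : ℝ} (hu : ε ≤ u) (huv : u ≤ v) (hv : v ≤ T) : IntervalIntegrable f volume u v :=
    hf.mono_set <| by
      rw [uIcc_of_le huv, uIcc_of_le (hu.trans (huv.trans hv))]
      exact Icc_subset_Icc hu hv
  rw [← integral_add_adjacent_intervals (hi le_rfl hεδ (hδM.trans hMT))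
      (hi hεδ (hδM.trans hMT) le_rfl),
    ← integral_add_adjacent_intervals (hi hεδ hδM hMT) (hi (hεδ.trans hδM) hMT le_rfl)]
  have hI₁ : ‖∫ t in ε..δ, f t‖ ≤ δ := by
    refine (norm_integral_le_of_norm_le_const fun t ht => h₁ t ?_).trans ?_
    · rw [uIoc_of_le hεδ] at ht
      exact hε.trans ht.1
    · rw [one_mul, abs_of_nonneg (sub_nonneg.2 hεδ)]
      linarith
  have hI₂ := norm_intervalIntegral_le_mul_log hδ hδM fun t ht => h₂ t (hδ.trans ht)
  have hI₃ : ‖∫ t in M..T, f t‖ ≤ δ := by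
    refine (norm_intervalIntegral_le_div_sq hM hMT fun t ht => h₃ t (hM.trans ht)).trans ?_
    have : 0 ≤ M * δ * T⁻¹ := by have := hM.trans_le hMT; positivity
    have : M * δ * M⁻¹ = δ := by field_simp
    linarith [mul_sub (M * δ) M⁻¹ T⁻¹]
  calc ‖(∫ t in ε..δ, f t) + ((∫ t in δ..M, f t) + ∫ t in M..T, f t)‖
      ≤ δ + (δ * log (M / δ) + δ) :=
        (norm_add_le _ _).trans (add_le_add hI₁ ((norm_add_le _ _).trans (add_le_add hI₂ hI₃)))
    _ = (2 + log (M / δ)) * δ := by ring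

end IntervalIntegral

lemma norm_sq_sub_sq_le {R : Type*} [NormedRing R] (a b : R) :
    ‖a ^ 2 - b ^ 2‖ ≤ (‖a‖ + ‖b‖) * ‖a - b‖ := by
  calc ‖a ^ 2 - b ^ 2‖ = ‖a * (a - b) + (a - b) * b‖ := by congr 1; noncomm_ring
    _ ≤ ‖a‖ * ‖a - b‖ + ‖a - b‖ * ‖b‖ :=
      (norm_add_le _ _).trans (add_le_add (norm_mul_le _ _) (norm_mul_le _ _))
    _ = (‖a‖ + ‖b‖) * ‖a - b‖ := by ring

lemma CStarAlgebra.norm_sub_le_one_of_mem_Icc {A : Type*} [CStarAlgebra A] [PartialOrder A]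
    [StarOrderedRing A] {x y : A} (hx : x ∈ Icc 0 1) (hy : y ∈ Icc 0 1) : ‖x - y‖ ≤ 1 := by
  nontriviality A
  have hxy : IsSelfAdjoint (x - y) := (IsSelfAdjoint.of_nonneg hx.1).sub (.of_nonneg hy.1)
  have hle : x - y ≤ algebraMap ℝ A 1 := by
    rw [map_one]
    exact (sub_le_self x hy.1).trans hx.2
  have hge : algebraMap ℝ A (-1) ≤ x - y := by
    rw [map_neg, map_one, neg_le, neg_sub]
    exact (sub_le_self y hx.1).trans hy.2
  rcases CStarAlgebra.norm_or_neg_norm_mem_spectrum hxy with h | h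
  · exact (le_algebraMap_iff_spectrum_le hxy).1 hle _ h
  · linarith [(algebraMap_le_iff_le_spectrum hxy).1 hge _ h]

section CStarAlgebra

variable {A : Type*} [CStarAlgebra A]

noncomputable def invSqAddSq (t : ℝ) (x : A) : A := cfc (fun s : ℝ => (s ^ 2 + t ^ 2)⁻¹) x

section Resolvent

variable {t : ℝ} {x : A}

lemma sq_add_algebraMap_eq_cfc (hx : IsSelfAdjoint x) :
    x ^ 2 + algebraMap ℝ A (t ^ 2) = cfc (fun s : ℝ => s ^ 2 + t ^ 2) x := by
  rw [cfc_add_const (t ^ 2) (· ^ 2) x, cfc_pow_id x 2]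

lemma isUnit_sq_add_algebraMap (ht : t ≠ 0) (hx : IsSelfAdjoint x) :
    IsUnit (x ^ 2 + algebraMap ℝ A (t ^ 2)) := by
  rw [sq_add_algebraMap_eq_cfc hx]
  exact isUnit_cfc_iff _ x |>.2 fun s _ => by positivity

lemma invSqAddSq_eq_ringInverse (ht : t ≠ 0) (hx : IsSelfAdjoint x) :
    invSqAddSq t x = Ring.inverse (x ^ 2 + algebraMap ℝ A (t ^ 2)) := by
  rw [invSqAddSq, cfc_inv _ x (fun s _ => by positivity), sq_add_algebraMap_eq_cfc hx]

lemma invSqAddSq_sub_invSqAddSq (ht : t ≠ 0) {a b : A} (ha : IsSelfAdjoint a)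
    (hb : IsSelfAdjoint b) :
    invSqAddSq t b - invSqAddSq t a = invSqAddSq t b * (a ^ 2 - b ^ 2) * invSqAddSq t a := by
  rw [invSqAddSq_eq_ringInverse ht ha, invSqAddSq_eq_ringInverse ht hb,
    Ring.inverse_sub_inverse (iff_of_true (isUnit_sq_add_algebraMap ht hb)
      (isUnit_sq_add_algebraMap ht ha)), add_sub_add_right_eq_sub]

lemma norm_invSqAddSq_le (ht : 0 < t) (x : A) : ‖invSqAddSq t x‖ ≤ (t ^ 2)⁻¹ := by
  refine norm_cfc_le (by positivity) fun s _ => ?_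
  rw [Real.norm_eq_abs, abs_of_pos (by positivity)]
  exact inv_anti₀ (by positivity) (le_add_of_nonneg_left (sq_nonneg s))

lemma norm_self_mul_invSqAddSq_le (ht : 0 < t) (hx : IsSelfAdjoint x) :
    ‖x * invSqAddSq t x‖ ≤ (2 * t)⁻¹ := by
  nth_rw 1 [← cfc_id' ℝ x]
  rw [invSqAddSq,
    ← cfc_mul (fun s => s) _ x continuousOn_id (continuous_inv_sq_add_sq ht.ne').continuousOn]
  exact norm_cfc_le (by positivity) fun s _ => abs_div_sq_add_sq_le ht s

lemma norm_invSqAddSq_mul_self_le (ht : 0 < t) (hx : IsSelfAdjoint x) :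
    ‖invSqAddSq t x * x‖ ≤ (2 * t)⁻¹ := by
  nth_rw 2 [← cfc_id' ℝ x]
  rw [invSqAddSq, ← cfc_mul _ _ x (continuous_inv_sq_add_sq ht.ne').continuousOn]
  exact norm_cfc_le (by positivity) fun s _ => by
    simpa only [inv_mul_eq_div, Real.norm_eq_abs] using abs_div_sq_add_sq_le ht s

lemma cfc_sq_div_sq_add_sq (ht : t ≠ 0) (hx : IsSelfAdjoint x) :
    cfc (fun s : ℝ => s ^ 2 / (s ^ 2 + t ^ 2)) x = 1 - t ^ 2 • invSqAddSq t x := by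
  have hc := (continuous_inv_sq_add_sq ht).continuousOn (s := spectrum ℝ x)
  rw [invSqAddSq, ← cfc_smul _ _ x hc, ← cfc_const_one ℝ x,
    ← cfc_sub (fun _ => (1 : ℝ)) (fun s : ℝ => t ^ 2 • (s ^ 2 + t ^ 2)⁻¹) x continuousOn_const
      fun s hs => (hc s hs).const_smul (t ^ 2)]
  refine cfc_congr fun s _ => ?_
  have : s ^ 2 + t ^ 2 ≠ 0 := by positivity
  simp only [smul_eq_mul]
  field_simp
  ring

lemma cfc_sq_div_sq_add_sq_sub (ht : t ≠ 0) {a b : A} (ha : IsSelfAdjoint a)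
    (hb : IsSelfAdjoint b) :
    cfc (fun s : ℝ => s ^ 2 / (s ^ 2 + t ^ 2)) a - cfc (fun s : ℝ => s ^ 2 / (s ^ 2 + t ^ 2)) b
      = t ^ 2 • (invSqAddSq t b * (a ^ 2 - b ^ 2) * invSqAddSq t a) := by
  rw [cfc_sq_div_sq_add_sq ht ha, cfc_sq_div_sq_add_sq ht hb,
    ← invSqAddSq_sub_invSqAddSq ht ha hb, smul_sub]
  abel

lemma norm_cfc_sq_div_sq_add_sq_sub_le_one (t : ℝ) (a b : A) :
    ‖cfc (fun s : ℝ => s ^ 2 / (s ^ 2 + t ^ 2)) a - cfc (fun s : ℝ => s ^ 2 / (s ^ 2 + t ^ 2)) b‖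
      ≤ 1 := by
  let _ := CStarAlgebra.spectralOrder A
  let _ := CStarAlgebra.spectralOrderedRing A
  have hIcc (x : A) : cfc (fun s : ℝ => s ^ 2 / (s ^ 2 + t ^ 2)) x ∈ Icc 0 1 :=
    ⟨cfc_nonneg fun s _ => (sq_div_sq_add_sq_mem_Icc s t).1,
      cfc_le_one _ _ fun s _ => (sq_div_sq_add_sq_mem_Icc s t).2⟩
  exact CStarAlgebra.norm_sub_le_one_of_mem_Icc (hIcc a) (hIcc b)

lemma norm_cfc_sq_div_sq_add_sq_sub_le_div (ht : 0 < t) {a b : A} (ha : IsSelfAdjoint a)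
    (hb : IsSelfAdjoint b) :
    ‖cfc (fun s : ℝ => s ^ 2 / (s ^ 2 + t ^ 2)) a - cfc (fun s : ℝ => s ^ 2 / (s ^ 2 + t ^ 2)) b‖
      ≤ ‖a - b‖ / t := by
  set Ra := invSqAddSq t a
  set Rb := invSqAddSq t b
  have hsplit : Rb * (a ^ 2 - b ^ 2) * Ra = Rb * b * (a - b) * Ra + Rb * (a - b) * (a * Ra) := by
    noncomm_ring
  rw [cfc_sq_div_sq_add_sq_sub ht.ne' ha hb, hsplit, norm_smul, Real.norm_eq_abs,
    abs_of_pos (by positivity)]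
  calc t ^ 2 * ‖Rb * b * (a - b) * Ra + Rb * (a - b) * (a * Ra)‖
      ≤ t ^ 2 * ((2 * t)⁻¹ * ‖a - b‖ * (t ^ 2)⁻¹ + (t ^ 2)⁻¹ * ‖a - b‖ * (2 * t)⁻¹) := by
        gcongr
        refine (norm_add_le _ _).trans (add_le_add ?_ ?_) <;> refine norm_mul₃_le.trans ?_ <;>
          gcongr
        exacts [norm_invSqAddSq_mul_self_le ht hb, norm_invSqAddSq_le ht a,
          norm_invSqAddSq_le ht b, norm_self_mul_invSqAddSq_le ht ha]
    _ = ‖a - b‖ / t := by field_simp; ring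

lemma norm_cfc_sq_div_sq_add_sq_sub_le_div_sq (ht : 0 < t) {a b : A} (ha : IsSelfAdjoint a)
    (hb : IsSelfAdjoint b) :
    ‖cfc (fun s : ℝ => s ^ 2 / (s ^ 2 + t ^ 2)) a - cfc (fun s : ℝ => s ^ 2 / (s ^ 2 + t ^ 2)) b‖
      ≤ (‖a‖ + ‖b‖) * ‖a - b‖ / t ^ 2 := by
  rw [cfc_sq_div_sq_add_sq_sub ht.ne' ha hb, norm_smul, Real.norm_eq_abs,
    abs_of_pos (by positivity)]
  calc t ^ 2 * ‖invSqAddSq t b * (a ^ 2 - b ^ 2) * invSqAddSq t a‖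
      ≤ t ^ 2 * ((t ^ 2)⁻¹ * ((‖a‖ + ‖b‖) * ‖a - b‖) * (t ^ 2)⁻¹) := by
        gcongr
        refine norm_mul₃_le.trans ?_
        gcongr
        exacts [norm_invSqAddSq_le ht b, norm_sq_sub_sq_le a b, norm_invSqAddSq_le ht a]
    _ = (‖a‖ + ‖b‖) * ‖a - b‖ / t ^ 2 := by field_simp

end Resolvent

section Truncation

variable {ε T : ℝ}

lemma continuousOn_uncurry_sq_div_sq_add_sq (hε : 0 ≤ ε) {S : Set ℝ} :
    ContinuousOn (Function.uncurry fun t s : ℝ => s ^ 2 / (s ^ 2 + t ^ 2)) (Ioc ε T ×ˢ S) :=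
  fun p hp => by
    have : 0 < p.1 := hε.trans_lt hp.1.1
    exact (Continuous.continuousAt (by fun_prop) |>.div (by fun_prop)
      (by positivity)).continuousWithinAt

lemma intervalIntegrable_cfc_sq_div_sq_add_sq {x : A} (hx : IsSelfAdjoint x) (hε : 0 < ε)
    (hT : ε ≤ T) :
    IntervalIntegrable (fun t => cfc (fun s : ℝ => s ^ 2 / (s ^ 2 + t ^ 2)) x) volume ε T := by
  rw [intervalIntegrable_iff_integrableOn_Ioc_of_le hT]
  exact integrableOn_cfc measurableSet_Ioc _ (fun _ => 1) x
    (continuousOn_uncurry_sq_div_sq_add_sq hε.le)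
    (.of_forall fun t s _ => norm_sq_div_sq_add_sq_le_one s t)
    (hasFiniteIntegral_const 1)

lemma cfc_truncAbs {x : A} (hx : IsSelfAdjoint x) (hε : 0 < ε) (hT : ε ≤ T) :
    cfc (truncAbs ε T) x
      = (2 / π) • ∫ t in ε..T, cfc (fun s : ℝ => s ^ 2 / (s ^ 2 + t ^ 2)) x := by
  unfold truncAbs
  rw [cfc_const_mul _ _ x (continuous_integral_sq_div_sq_add_sq hε hT).continuousOn]
  congr 1
  simp_rw [integral_of_le hT]
  exact cfc_setIntegral measurableSet_Ioc _ (fun _ => 1) x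
    (continuousOn_uncurry_sq_div_sq_add_sq hε.le)
    (.of_forall fun t s _ => norm_sq_div_sq_add_sq_le_one s t)
    (hasFiniteIntegral_const 1)

lemma norm_cfc_abs_sub_cfc_truncAbs_le (x : A) (hε : 0 < ε) (hT : ε ≤ T) :
    ‖cstarAbs x - cfc (truncAbs ε T) x‖ ≤ 2 / π * (ε + ‖x‖ ^ 2 / T) := by
  have hT₀ : 0 < T := hε.trans_le hT
  rcases subsingleton_or_nontrivial A with _ | _
  · rw [Subsingleton.elim (cstarAbs x - _) 0, norm_zero]
    positivity
  rw [cstarAbs, ← cfc_sub _ _ x (by fun_prop) (continuous_truncAbs hε hT).continuousOn]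
  refine norm_cfc_le (by positivity) fun s hs => ?_
  refine (abs_abs_sub_truncAbs_le s hε hT₀).trans ?_
  have : s ^ 2 ≤ ‖x‖ ^ 2 := by
    simpa only [Real.norm_eq_abs, sq_abs] using
      pow_le_pow_left₀ (norm_nonneg s) (spectrum.norm_le_norm_of_mem hs) 2
  gcongr

end Truncation

theorem norm_cstarAbs_sub_cstarAbs_le_add {a b : A} (ha : IsSelfAdjoint a) (hb : IsSelfAdjoint b)
    {ε T : ℝ} (hε : 0 < ε) (hεδ : ε ≤ ‖a - b‖) (hT : ‖a‖ + ‖b‖ ≤ T) :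
    ‖cstarAbs a - cstarAbs b‖ ≤ 2 / π * (2 + log ((‖a‖ + ‖b‖) / ‖a - b‖)) * ‖a - b‖
      + 2 / π * (2 * ε + (‖a‖ ^ 2 + ‖b‖ ^ 2) / T) := by
  have hεT : ε ≤ T := hεδ.trans ((norm_sub_le a b).trans hT)
  have hIa := intervalIntegrable_cfc_sq_div_sq_add_sq ha hε hεT
  have hIb := intervalIntegrable_cfc_sq_div_sq_add_sq hb hε hεT
  have hmid : ‖cfc (truncAbs ε T) a - cfc (truncAbs ε T) b‖
      ≤ 2 / π * ((2 + log ((‖a‖ + ‖b‖) / ‖a - b‖)) * ‖a - b‖) := by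
    rw [cfc_truncAbs ha hε hεT, cfc_truncAbs hb hε hεT, ← smul_sub,
      ← intervalIntegral.integral_sub hIa hIb, norm_smul, Real.norm_of_nonneg (by positivity)]
    gcongr
    exact norm_intervalIntegral_le_of_norm_le_min hε hεδ (norm_sub_le a b) hT (hIa.sub hIb)
      (fun t _ => norm_cfc_sq_div_sq_add_sq_sub_le_one t a b)
      (fun t ht => norm_cfc_sq_div_sq_add_sq_sub_le_div ht ha hb)
      (fun t ht => norm_cfc_sq_div_sq_add_sq_sub_le_div_sq ht ha hb)
  calc ‖cstarAbs a - cstarAbs b‖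
      = ‖(cstarAbs a - cfc (truncAbs ε T) a) - (cstarAbs b - cfc (truncAbs ε T) b)
          + (cfc (truncAbs ε T) a - cfc (truncAbs ε T) b)‖ := by congr 1; abel
    _ ≤ ‖cstarAbs a - cfc (truncAbs ε T) a‖ + ‖cstarAbs b - cfc (truncAbs ε T) b‖
          + ‖cfc (truncAbs ε T) a - cfc (truncAbs ε T) b‖ :=
        (norm_add_le _ _).trans (add_le_add_left (norm_sub_le _ _) _)
    _ ≤ 2 / π * (ε + ‖a‖ ^ 2 / T) + 2 / π * (ε + ‖b‖ ^ 2 / T)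
          + 2 / π * ((2 + log ((‖a‖ + ‖b‖) / ‖a - b‖)) * ‖a - b‖) := by
        gcongr <;> exact norm_cfc_abs_sub_cfc_truncAbs_le _ hε hεT
    _ = _ := by ring

end CStarAlgebra

/-- Kato's inequality: if `a`, `b` are selfadjoint with `a ≠ b`, then
`‖|a| - |b|‖ ≤ (2/π)(2 + log((‖a‖+‖b‖)/‖a-b‖))·‖a-b‖`. -/
theorem stmt_1 {A : Type*} [CStarAlgebra A]
    (a b : A) (ha : IsSelfAdjoint a) (hb : IsSelfAdjoint b) (hne : a ≠ b) :
    ‖cstarAbs a - cstarAbs b‖ ≤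
      (2 / Real.pi) * (2 + Real.log ((‖a‖ + ‖b‖) / ‖a - b‖)) * ‖a - b‖ := by
  have hδ : 0 < ‖a - b‖ := norm_pos_iff.2 (sub_ne_zero.2 hne)
  have hM : 0 < ‖a‖ + ‖b‖ := hδ.trans_le (norm_sub_le a b)
  have hπ : 2 / π ≤ 1 := (div_le_one pi_pos).2 two_le_pi
  refine le_of_forall_pos_le_add fun η hη => ?_
  set S := ‖a‖ ^ 2 + ‖b‖ ^ 2
  set ε := min ‖a - b‖ (η / 4)
  set T := ‖a‖ + ‖b‖ + 2 * S / η
  have hε : 0 < ε := lt_min hδ (by positivity)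
  have hT : 0 < T := by positivity
  have hST : S / T ≤ η / 2 := by
    have : η * T = η * (‖a‖ + ‖b‖) + 2 * S := by simp only [T]; field_simp
    rw [div_le_iff₀ hT]
    nlinarith
  have herr : 2 / π * (2 * ε + S / T) ≤ η :=
    calc 2 / π * (2 * ε + S / T) ≤ 2 * ε + S / T := mul_le_of_le_one_left (by positivity) hπ
      _ ≤ η := by linarith [min_le_right ‖a - b‖ (η / 4)]
  linarith [norm_cstarAbs_sub_cstarAbs_le_add ha hb hε (min_le_left _ _)
    (le_add_of_nonneg_right (by positivity) : ‖a‖ + ‖b‖ ≤ T)]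
end

section
/- Let B₊ and B₋ be continuous functions from a compact space X to the selfadjoint N×N complex matrices with 0 ≤ B± ≤ 1, ‖(B± - B±²)(B₊ - B₋)‖ < δ (for both signs), and ‖(B₊ - B₊²) - (B₋ - B₋²)‖ < δ, where 0 < δ < 1. Define κ(t) = √(t - t²) (applied by functional calculus) and let Q be the 2N×2N matrix-valued function with blocks Q₁₁ = 1 - B₊, Q₁₂ = Q₂₁ = κ(B₊), Q₂₂ = B₋. Then ‖Q - Q²‖ < 3√δ. -/
/-!
Because `κ(B₊)² = B₊ - B₊²` and `κ(B₊)` commutes with `B₊`, the upper left block of `Q - Q²`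
vanishes, the lower right one is `(B₋ - B₋²) - (B₊ - B₊²)`, and the off-diagonal ones are
`E = κ(B₊)(B₊ - B₋)` and its adjoint. By the C⋆-identity
`‖E‖² = ‖(B₊ - B₋)(B₊ - B₊²)(B₊ - B₋)‖ ≤ ‖(B₊ - B₊²)(B₊ - B₋)‖ < δ`, since `‖B₊ - B₋‖ ≤ 1`.
Hence `‖Q - Q²‖ < 2√δ + δ ≤ 3√δ`.
-/

open scoped Matrix.Norms.L2Operator ComplexOrder

open scoped MatrixOrder

namespace Matrix

variable {𝕜 : Type*} [RCLike 𝕜] {m₁ m₂ n₁ n₂ : Type*} [Fintype m₁] [Fintype m₂]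
  [Fintype n₁] [Fintype n₂] [DecidableEq n₁] [DecidableEq n₂]

lemma l2_opNorm_fromRows_zero_right (A : Matrix m₁ n₁ 𝕜) :
    ‖fromRows A (0 : Matrix m₂ n₁ 𝕜)‖ = ‖A‖ := by
  refine (mul_self_inj (norm_nonneg _) (norm_nonneg _)).1 ?_
  rw [← l2_opNorm_conjTranspose_mul_self, ← l2_opNorm_conjTranspose_mul_self,
    conjTranspose_fromRows_eq_fromCols_conjTranspose, fromCols_mul_fromRows]
  simp

lemma l2_opNorm_fromRows_zero_left (A : Matrix m₂ n₁ 𝕜) :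
    ‖fromRows (0 : Matrix m₁ n₁ 𝕜) A‖ = ‖A‖ := by
  refine (mul_self_inj (norm_nonneg _) (norm_nonneg _)).1 ?_
  rw [← l2_opNorm_conjTranspose_mul_self, ← l2_opNorm_conjTranspose_mul_self,
    conjTranspose_fromRows_eq_fromCols_conjTranspose, fromCols_mul_fromRows]
  simp

lemma l2_opNorm_fromRows_le (A₁ : Matrix m₁ n₁ 𝕜) (A₂ : Matrix m₂ n₁ 𝕜) :
    ‖fromRows A₁ A₂‖ ≤ ‖A₁‖ + ‖A₂‖ := by
  have : fromRows A₁ A₂ = fromRows A₁ 0 + fromRows 0 A₂ := by ext (_ | _) _ <;> simp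
  rw [this, ← l2_opNorm_fromRows_zero_right A₁ (m₂ := m₂),
    ← l2_opNorm_fromRows_zero_left A₂ (m₁ := m₁)]
  exact norm_add_le _ _

variable [DecidableEq m₁]

lemma l2_opNorm_fromCols_le (A₁ : Matrix m₁ n₁ 𝕜) (A₂ : Matrix m₁ n₂ 𝕜) :
    ‖fromCols A₁ A₂‖ ≤ ‖A₁‖ + ‖A₂‖ := by
  rw [← l2_opNorm_conjTranspose, conjTranspose_fromCols_eq_fromRows_conjTranspose,
    ← l2_opNorm_conjTranspose A₁, ← l2_opNorm_conjTranspose A₂]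
  exact l2_opNorm_fromRows_le _ _

variable [DecidableEq m₂]

lemma l2_opNorm_fromBlocks_le (A : Matrix m₁ n₁ 𝕜) (B : Matrix m₁ n₂ 𝕜)
    (C : Matrix m₂ n₁ 𝕜) (D : Matrix m₂ n₂ 𝕜) :
    ‖fromBlocks A B C D‖ ≤ ‖A‖ + ‖B‖ + ‖C‖ + ‖D‖ := by
  rw [← fromRows_fromCols_eq_fromBlocks]
  calc _ ≤ ‖fromCols A B‖ + ‖fromCols C D‖ := l2_opNorm_fromRows_le _ _
    _ ≤ ‖A‖ + ‖B‖ + (‖C‖ + ‖D‖) :=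
      add_le_add (l2_opNorm_fromCols_le A B) (l2_opNorm_fromCols_le C D)
    _ = _ := by ring

end Matrix

section CFC

variable {A : Type*} [Ring A] [StarRing A] [TopologicalSpace A] [Algebra ℝ A]
  [ContinuousFunctionalCalculus ℝ A IsSelfAdjoint] [PartialOrder A] [StarOrderedRing A]
  [NonnegSpectrumClass ℝ A]

lemma spectrum_subset_Icc_of_nonneg_of_le_one {a : A} (ha₀ : 0 ≤ a) (ha₁ : a ≤ 1) :
    spectrum ℝ a ⊆ Set.Icc 0 1 := fun t ht =>
  ⟨spectrum_nonneg_of_nonneg ha₀ ht,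
    (le_algebraMap_iff_spectrum_le (r := (1 : ℝ))).1 (by rwa [map_one]) t ht⟩

lemma cfc_sqrt_sub_sq_mul_self {a : A} (ha₀ : 0 ≤ a) (ha₁ : a ≤ 1) :
    cfc (fun t : ℝ => √(t - t ^ 2)) a * cfc (fun t : ℝ => √(t - t ^ 2)) a = a - a ^ 2 := by
  have hspec := spectrum_subset_Icc_of_nonneg_of_le_one ha₀ ha₁
  rw [← cfc_mul .., cfc_congr (g := fun t : ℝ => t - t ^ 2), cfc_sub .., cfc_id' ℝ a,
    cfc_pow_id a 2]
  intro t ht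
  obtain ⟨ht₀, ht₁⟩ := hspec ht
  exact Real.mul_self_sqrt (by nlinarith)

end CFC

section CStarAlgebra

variable {A : Type*} [CStarAlgebra A] [PartialOrder A] [StarOrderedRing A]

lemma IsSelfAdjoint.norm_le_of_neg_le_of_le {a : A} (ha : IsSelfAdjoint a) {r : ℝ} (hr : 0 ≤ r)
    (h₁ : -algebraMap ℝ A r ≤ a) (h₂ : a ≤ algebraMap ℝ A r) : ‖a‖ ≤ r := by
  rw [← map_neg, algebraMap_le_iff_le_spectrum] at h₁
  rw [le_algebraMap_iff_spectrum_le] at h₂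
  rw [← cfc_id ℝ a]
  exact norm_cfc_le hr fun t ht => abs_le.2 ⟨h₁ t ht, h₂ t ht⟩

lemma norm_sub_le_one_of_mem_Icc {a b : A} (ha₀ : 0 ≤ a) (ha₁ : a ≤ 1) (hb₀ : 0 ≤ b)
    (hb₁ : b ≤ 1) : ‖a - b‖ ≤ 1 := by
  refine (IsSelfAdjoint.of_nonneg ha₀).sub (.of_nonneg hb₀) |>.norm_le_of_neg_le_of_le
    zero_le_one ?_ ?_ <;> rw [map_one]
  · calc -1 ≤ a - 1 := by simpa using ha₀
      _ ≤ a - b := by gcongr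
  · calc a - b ≤ 1 - b := by gcongr
      _ ≤ 1 := by simpa using hb₀

end CStarAlgebra

lemma IsSelfAdjoint.norm_mul_sq_le {E : Type*} [NonUnitalNormedRing E] [StarRing E]
    [CStarRing E] {k d : E} (hk : IsSelfAdjoint k) (hd : IsSelfAdjoint d) :
    ‖k * d‖ ^ 2 ≤ ‖d‖ * ‖k * k * d‖ := by
  calc ‖k * d‖ ^ 2 = ‖star (k * d) * (k * d)‖ := by rw [CStarRing.norm_star_mul_self, sq]
    _ = ‖d * (k * k * d)‖ := by rw [star_mul, hk.star_eq, hd.star_eq]; noncomm_ring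
    _ ≤ ‖d‖ * ‖k * k * d‖ := norm_mul_le _ _

namespace Matrix

lemma fromBlocks_sub_sq {R n : Type*} [Ring R] [Fintype n] [DecidableEq n] {P M K : Matrix n n R}
    (hK : K * K = P - P ^ 2) (hPK : Commute P K) :
    fromBlocks (1 - P) K K M - fromBlocks (1 - P) K K M ^ 2
      = fromBlocks 0 (K * (P - M)) ((P - M) * K) ((M - M ^ 2) - (P - P ^ 2)) := by
  rw [sq, fromBlocks_multiply, sub_eq_iff_eq_add, fromBlocks_add, fromBlocks_inj]
  refine ⟨?_, ?_, ?_, ?_⟩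
  · rw [hK]; noncomm_ring
  · rw [mul_sub, ← hPK.eq]; noncomm_ring
  · rw [sub_mul, hPK.eq]; noncomm_ring
  · rw [hK]; noncomm_ring

variable {𝕜 n : Type*} [RCLike 𝕜] [Fintype n] [DecidableEq n]

lemma l2_opNorm_fromBlocks_sub_sq_le {P M K : Matrix n n 𝕜} (hP : IsSelfAdjoint P)
    (hM : IsSelfAdjoint M) (hK : IsSelfAdjoint K) (hKK : K * K = P - P ^ 2)
    (hPK : Commute P K) (hPM : ‖P - M‖ ≤ 1) :
    ‖fromBlocks (1 - P) K K M - fromBlocks (1 - P) K K M ^ 2‖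
      ≤ 2 * √‖(P - P ^ 2) * (P - M)‖ + ‖(P - P ^ 2) - (M - M ^ 2)‖ := by
  have hE : ‖K * (P - M)‖ ≤ √‖(P - P ^ 2) * (P - M)‖ := by
    refine Real.le_sqrt_of_sq_le ?_
    calc ‖K * (P - M)‖ ^ 2 ≤ ‖P - M‖ * ‖K * K * (P - M)‖ :=
          hK.norm_mul_sq_le (hP.sub hM)
      _ ≤ 1 * ‖(P - P ^ 2) * (P - M)‖ := by rw [hKK]; gcongr
      _ = _ := one_mul _
  have hE' : ‖(P - M) * K‖ = ‖K * (P - M)‖ := by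
    rw [← norm_star, star_mul, hK.star_eq, (hP.sub hM).star_eq]
  rw [fromBlocks_sub_sq hKK hPK]
  calc _ ≤ ‖(0 : Matrix n n 𝕜)‖ + ‖K * (P - M)‖ + ‖(P - M) * K‖
        + ‖(M - M ^ 2) - (P - P ^ 2)‖ := l2_opNorm_fromBlocks_le ..
    _ ≤ _ := by rw [norm_zero, hE', norm_sub_rev]; linarith

end Matrix

theorem stmt_2_general {N : ℕ} {X : Type*} [TopologicalSpace X] [CompactSpace X]
    (Bp Bm : C(X, Matrix (Fin N) (Fin N) ℂ))
    (hp0 : ∀ x, (Bp x).PosSemidef) (hp1 : ∀ x, (1 - Bp x).PosSemidef)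
    (hm0 : ∀ x, (Bm x).PosSemidef) (hm1 : ∀ x, (1 - Bm x).PosSemidef)
    (δ : ℝ) (hδ1 : δ < 1)
    (h1 : ‖(Bp - Bp ^ 2) * (Bp - Bm)‖ < δ)
    (h3 : ‖(Bp - Bp ^ 2) - (Bm - Bm ^ 2)‖ < δ)
    (K : C(X, Matrix (Fin N) (Fin N) ℂ))
    (hK : ∀ x, K x = cfc (fun t : ℝ => Real.sqrt (t - t ^ 2)) (Bp x))
    (Q : C(X, Matrix (Fin N ⊕ Fin N) (Fin N ⊕ Fin N) ℂ))
    (hQ : ∀ x, Q x = Matrix.fromBlocks (1 - Bp x) (K x) (K x) (Bm x)) :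
    ‖Q - Q ^ 2‖ < 3 * Real.sqrt δ := by
  have hpoint (x : X) : ‖(Q - Q ^ 2) x‖
      ≤ 2 * √‖(Bp - Bp ^ 2) * (Bp - Bm)‖ + ‖(Bp - Bp ^ 2) - (Bm - Bm ^ 2)‖ := by
    have hP₀ := (hp0 x).nonneg
    have hP₁ : Bp x ≤ 1 := hp1 x
    have hM₀ := (hm0 x).nonneg
    have hM₁ : Bm x ≤ 1 := hm1 x
    have hPK : Commute (Bp x) (cfc (fun t : ℝ => √(t - t ^ 2)) (Bp x)) := by
      simpa only [cfc_id' ℝ (Bp x)] using cfc_commute_cfc (fun t : ℝ => t) _ (Bp x)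
    have hprod := ((Bp - Bp ^ 2) * (Bp - Bm)).norm_coe_le_norm x
    have hdiff := ((Bp - Bp ^ 2) - (Bm - Bm ^ 2)).norm_coe_le_norm x
    simp only [ContinuousMap.mul_apply, ContinuousMap.sub_apply, ContinuousMap.pow_apply]
      at hprod hdiff ⊢
    calc ‖Q x - Q x ^ 2‖
        ≤ 2 * √‖(Bp x - Bp x ^ 2) * (Bp x - Bm x)‖
          + ‖(Bp x - Bp x ^ 2) - (Bm x - Bm x ^ 2)‖ := by
          rw [hQ x, hK x]
          exact Matrix.l2_opNorm_fromBlocks_sub_sq_le (.of_nonneg hP₀) (.of_nonneg hM₀)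
            (cfc_predicate _ _) (cfc_sqrt_sub_sq_mul_self hP₀ hP₁) hPK
            (norm_sub_le_one_of_mem_Icc hP₀ hP₁ hM₀ hM₁)
      _ ≤ _ := by gcongr
  have hδ : δ ≤ √δ := Real.le_sqrt_of_sq_le (by nlinarith [(norm_nonneg _).trans_lt h1])
  calc ‖Q - Q ^ 2‖ ≤ 2 * √‖(Bp - Bp ^ 2) * (Bp - Bm)‖ + ‖(Bp - Bp ^ 2) - (Bm - Bm ^ 2)‖ :=
        (ContinuousMap.norm_le _ (by positivity)).2 hpoint
    _ < 2 * √δ + δ := by gcongr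
    _ ≤ 3 * √δ := by linarith

/-- Let `Bp`, `Bm` be continuous functions from a compact space `X` to the selfadjoint `N×N`
matrices with `0 ≤ B± ≤ 1` pointwise, `‖(B± - B±²)(Bp - Bm)‖ < δ` for both signs, and
`‖(Bp - Bp²) - (Bm - Bm²)‖ < δ`, where `0 < δ < 1`.  With `κ(t) = √(t - t²)` applied via
the continuous functional calculus, and `Q` the `2N×2N` matrix-valued function with blocks
`Q₁₁ = 1 - Bp`, `Q₁₂ = Q₂₁ = κ(Bp)`, `Q₂₂ = Bm`, one has `‖Q - Q²‖ < 3√δ`.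
Norms are supremum `L²` operator norms on `C(X, M_N)` and `C(X, M_{2N})`. -/
theorem stmt_2 {N : ℕ} {X : Type*} [TopologicalSpace X] [CompactSpace X]
    (Bp Bm : C(X, Matrix (Fin N) (Fin N) ℂ))
    (hp0 : ∀ x, (Bp x).PosSemidef) (hp1 : ∀ x, (1 - Bp x).PosSemidef)
    (hm0 : ∀ x, (Bm x).PosSemidef) (hm1 : ∀ x, (1 - Bm x).PosSemidef)
    (δ : ℝ) (hδ0 : 0 < δ) (hδ1 : δ < 1)
    (h1 : ‖(Bp - Bp ^ 2) * (Bp - Bm)‖ < δ)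
    (h2 : ‖(Bm - Bm ^ 2) * (Bp - Bm)‖ < δ)
    (h3 : ‖(Bp - Bp ^ 2) - (Bm - Bm ^ 2)‖ < δ)
    (K : C(X, Matrix (Fin N) (Fin N) ℂ))
    (hK : ∀ x, K x = cfc (fun t : ℝ => Real.sqrt (t - t ^ 2)) (Bp x))
    (Q : C(X, Matrix (Fin N ⊕ Fin N) (Fin N ⊕ Fin N) ℂ))
    (hQ : ∀ x, Q x = Matrix.fromBlocks (1 - Bp x) (K x) (K x) (Bm x)) :
    ‖Q - Q ^ 2‖ < 3 * Real.sqrt δ :=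
  stmt_2_general Bp Bm hp0 hp1 hm0 hm1 δ hδ1 h1 h3 K hK Q hQ
end

section
/- If Q is selfadjoint with ‖Q - Q²‖ < 1/4, and P, P' are projections with ‖Q - P‖ < 1/2 and ‖Q - P'‖ < 1/2, then ‖P - P'‖ < 1, and hence P and P' are unitarily equivalent. -/
/-!
The element `v = q p + (1 - q)(1 - p)` intertwines `p` and `q` (`v p = q v`), and
`v⋆ v = v v⋆ = 1 - (p - q)²`, which is invertible as soon as `‖p - q‖ < 1`. The unitary part
`(v⋆ v)^{-1/2} v` of the normal invertible element `v` still intertwines `p` and `q`.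
-/

section Intertwiner

variable {R : Type*} [Ring R]

def projIntertwiner (p q : R) : R := q * p + (1 - q) * (1 - p)

variable {p q : R}

theorem projIntertwiner_mul_left (hp : IsIdempotentElem p) (hq : IsIdempotentElem q) :
    projIntertwiner p q * p = q * projIntertwiner p q := by
  simp only [projIntertwiner, mul_sub, sub_mul, add_mul, mul_add, mul_one, one_mul, mul_assoc,
    hp.eq, hq.eq, ← mul_assoc q q]
  abel

theorem projIntertwiner_mul_projIntertwiner (hp : IsIdempotentElem p) (hq : IsIdempotentElem q) :
    projIntertwiner q p * projIntertwiner p q = 1 - (p - q) ^ 2 := by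
  have hq' (x : R) : q * (q * x) = q * x := by rw [← mul_assoc, hq.eq]
  simp only [projIntertwiner, sq, mul_sub, sub_mul, add_mul, mul_add, mul_one, one_mul, mul_assoc,
    hp.eq, hq.eq, hq']
  abel

theorem star_projIntertwiner [StarRing R] (hp : IsSelfAdjoint p) (hq : IsSelfAdjoint q) :
    star (projIntertwiner p q) = projIntertwiner q p := by
  simp [projIntertwiner, star_sub, hp.star_eq, hq.star_eq]

end Intertwiner

section CStarAlgebra

variable {A : Type*} [CStarAlgebra A]

theorem exists_unitary_conj_eq_of_isStarNormal {v p q : A} (hv : IsStarNormal v)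
    (hvv : IsUnit (star v * v)) (hp : IsSelfAdjoint p) (hq : IsSelfAdjoint q)
    (hvpq : v * p = q * v) : ∃ u ∈ unitary A, q = u * p * star u := by
  -- the order needed by `CFC.sqrt` is not a global instance on C⋆-algebras
  let := CStarAlgebra.spectralOrder A
  let := CStarAlgebra.spectralOrderedRing A
  set b := star v * v with hb
  have hvb : v * star v = b := hv.star_comm_self.symm.eq
  set w : A := ↑hvv.unit⁻¹
  have hwb : w * b = 1 := hvv.unit.inv_mul
  have hbw : b * w = 1 := hvv.unit.mul_inv
  set t := CFC.sqrt w
  have htt : t * t = w := CFC.sqrt_mul_sqrt_self w (CFC.inv_nonneg_of_nonneg hvv.unit)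
  have ht : IsSelfAdjoint t := (CFC.sqrt_nonneg w).isSelfAdjoint
  have commute_t {x : A} (hx : Commute x b) : Commute x t :=
    ((hx.units_inv_right (u := hvv.unit)).symm.cfcₙ_nnreal NNReal.sqrt).symm
  have hv_b : Commute v b := by
    simp only [Commute, SemiconjBy, hb, ← mul_assoc, hvb]
  have hq_b : Commute q b := by
    have hstar : star v * q = p * star v := by
      simpa [star_mul, hp.star_eq, hq.star_eq] using congrArg star hvpq.symm
    simp only [Commute, SemiconjBy, ← hvb, ← mul_assoc, ← hvpq]
    rw [mul_assoc _ _ q, hstar, mul_assoc]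
  have htb : t * b * t = 1 := by rw [mul_assoc, (commute_t (.refl b)).eq, ← mul_assoc, htt, hwb]
  refine ⟨t * v, Unitary.mem_iff.mpr ⟨?_, ?_⟩, ?_⟩
  · calc star (t * v) * (t * v) = star v * (t * t) * v := by
          simp only [star_mul, ht.star_eq, mul_assoc]
      _ = 1 := by
          rw [htt, mul_assoc, ← (hv_b.units_inv_right (u := hvv.unit)).eq, ← mul_assoc, hbw]
  · calc (t * v) * star (t * v) = t * b * t := by
          simp only [star_mul, ht.star_eq, ← hvb, mul_assoc]
      _ = 1 := htb
  · calc q = q * (t * b * t) := by rw [htb, mul_one]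
      _ = t * (q * v) * star v * t := by
          rw [← mul_assoc q, ← mul_assoc q, (commute_t hq_b).eq, ← hvb]; simp only [mul_assoc]
      _ = t * v * p * star (t * v) := by
          rw [← hvpq, star_mul, ht.star_eq]; simp only [mul_assoc]

theorem IsStarProjection.exists_unitary_conj_eq_of_norm_sub_lt_one {p q : A}
    (hp : IsStarProjection p) (hq : IsStarProjection q) (hpq : ‖p - q‖ < 1) :
    ∃ u ∈ unitary A, q = u * p * star u := by
  have hv : star (projIntertwiner p q) * projIntertwiner p q = 1 - (p - q) ^ 2 := by
    rw [star_projIntertwiner hp.isSelfAdjoint hq.isSelfAdjoint,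
      projIntertwiner_mul_projIntertwiner hp.isIdempotentElem hq.isIdempotentElem]
  have hv' : projIntertwiner p q * star (projIntertwiner p q) = 1 - (p - q) ^ 2 := by
    rw [star_projIntertwiner hp.isSelfAdjoint hq.isSelfAdjoint, ← neg_sub q p, neg_sq,
      projIntertwiner_mul_projIntertwiner hq.isIdempotentElem hp.isIdempotentElem]
  have hunit : IsUnit (1 - (p - q) ^ 2) := isUnit_one_sub_of_norm_lt_one <|
    (norm_pow_le' _ two_pos).trans_lt (pow_lt_one₀ (norm_nonneg _) hpq two_ne_zero)
  exact exists_unitary_conj_eq_of_isStarNormal ⟨hv.trans hv'.symm⟩ (hv ▸ hunit)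
    hp.isSelfAdjoint hq.isSelfAdjoint
    (projIntertwiner_mul_left hp.isIdempotentElem hq.isIdempotentElem)

end CStarAlgebra

theorem stmt_8_general {A : Type*} [CStarAlgebra A]
    (Q P P' : A)
    (hP : IsSelfAdjoint P) (hP2 : P ^ 2 = P)
    (hP' : IsSelfAdjoint P') (hP'2 : P' ^ 2 = P')
    (h1 : ‖Q - P‖ < 1 / 2) (h2 : ‖Q - P'‖ < 1 / 2) :
    ‖P - P'‖ < 1 ∧ ∃ u ∈ unitary A, P' = u * P * star u := by
  have hPP' : ‖P - P'‖ < 1 := by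
    have := norm_sub_le_norm_sub_add_norm_sub P Q P'
    rw [norm_sub_rev P Q] at this
    linarith
  exact ⟨hPP', IsStarProjection.exists_unitary_conj_eq_of_norm_sub_lt_one
    ⟨(sq P).symm.trans hP2, hP⟩ ⟨(sq P').symm.trans hP'2, hP'⟩ hPP'⟩

/-- If `Q` is selfadjoint with `‖Q - Q²‖ < 1/4` and `P`, `P'` are projections with
`‖Q - P‖ < 1/2`, `‖Q - P'‖ < 1/2`, then `‖P - P'‖ < 1` and `P`, `P'` are unitarily
equivalent. -/
theorem stmt_8 {A : Type*} [CStarAlgebra A]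
    (Q P P' : A) (hQ : IsSelfAdjoint Q) (hQ2 : ‖Q - Q ^ 2‖ < 1 / 4)
    (hP : IsSelfAdjoint P) (hP2 : P ^ 2 = P)
    (hP' : IsSelfAdjoint P') (hP'2 : P' ^ 2 = P')
    (h1 : ‖Q - P‖ < 1 / 2) (h2 : ‖Q - P'‖ < 1 / 2) :
    ‖P - P'‖ < 1 ∧ ∃ u ∈ unitary A, P' = u * P * star u :=
  stmt_8_general Q P P' hP hP2 hP' hP'2 h1 h2
end

section
/- Let A₊, A₋ be selfadjoint N×N matrices with ‖A₊‖ ≤ m, ‖A₋‖ ≤ m (m ≥ 1) such that ‖(A± - A±²)(A₊ - A₋)‖ < mε for both signs, with mε ≤ 1. Then with g(t) = t - t², ‖g(A₊) - g(A₋)‖ < 2(m+3)√(mε). -/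
/-!
Write `b = g(A₊) - g(A₋)` and `c = A₊ - A₋`, both selfadjoint, so that `b = c - A₊c - cA₋` and
`‖bc‖ < 2mε`. Cut the spectrum of `c` at `s = √(mε)`: on the spectral subspace of `c` where
`|λ| < s`, the identity shows that `b` is of size `(1 + 2m)s`; on its complement `c` is invertible
with inverse of norm `≤ 1/s`, so there `b` is of size `‖bc‖/s < 2s`. Selfadjointness of `b`
controls the off-diagonal part by the same quantity.
-/

open scoped Matrix.Norms.L2Operator

theorem norm_compression_sub_mul_sub_mul_le {A : Type*} [NormedRing A] {c x y p : A} {m s : ℝ}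
    (hp : ‖p‖ ≤ 1) (hx : ‖x‖ ≤ m) (hy : ‖y‖ ≤ m) (hcp : ‖c * p‖ ≤ s) (hpc : ‖p * c‖ ≤ s) :
    ‖p * (c - x * c - c * y) * p‖ ≤ (1 + 2 * m) * s := by
  have hm : 0 ≤ m := (norm_nonneg x).trans hx
  have hs : 0 ≤ s := (norm_nonneg _).trans hcp
  have expand :
      p * (c - x * c - c * y) * p = p * (c * p) - p * x * (c * p) - p * c * (y * p) := by
    noncomm_ring
  rw [expand]
  calc _ ≤ ‖p‖ * ‖c * p‖ + ‖p‖ * ‖x‖ * ‖c * p‖ + ‖p * c‖ * (‖y‖ * ‖p‖) := by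
        refine (norm_sub_le _ _).trans (add_le_add ((norm_sub_le _ _).trans
          (add_le_add (norm_mul_le _ _) ?_)) ?_)
        · exact (norm_mul_le _ _).trans (by gcongr; exact norm_mul_le _ _)
        · exact (norm_mul_le _ _).trans (by gcongr; exact norm_mul_le _ _)
    _ ≤ 1 * s + 1 * m * s + s * (m * 1) := by gcongr
    _ = (1 + 2 * m) * s := by ring

theorem IsSelfAdjoint.norm_le_compression_add {A : Type*} [NormedRing A] [StarRing A]
    [CStarRing A] {b p : A} (hb : IsSelfAdjoint b) (hp : IsSelfAdjoint p) (hp1 : ‖p‖ ≤ 1) :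
    ‖b‖ ≤ ‖p * b * p‖ + 2 * ‖b * (1 - p)‖ := by
  have hsplit : b = p * b * p + (1 - p) * b * p + b * (1 - p) := by noncomm_ring
  have hstar : ‖(1 - p) * b‖ = ‖b * (1 - p)‖ := by
    rw [← norm_star, star_mul, hb.star_eq, star_sub, star_one, hp.star_eq]
  calc ‖b‖ ≤ ‖p * b * p‖ + ‖(1 - p) * b * p‖ + ‖b * (1 - p)‖ := by
        conv_lhs => rw [hsplit]
        exact norm_add₃_le
    _ ≤ ‖p * b * p‖ + ‖(1 - p) * b‖ * 1 + ‖b * (1 - p)‖ := by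
        gcongr
        exact (norm_mul_le _ _).trans (by gcongr)
    _ = ‖p * b * p‖ + 2 * ‖b * (1 - p)‖ := by rw [hstar]; ring

theorem IsSelfAdjoint.exists_spectral_cut {A : Type*} [CStarAlgebra A] {c : A}
    (hc : IsSelfAdjoint c) (hfin : (spectrum ℝ c).Finite) {s : ℝ} (hs : 0 < s) :
    ∃ p e : A, IsSelfAdjoint p ∧ ‖p‖ ≤ 1 ∧ ‖c * p‖ ≤ s ∧ ‖p * c‖ ≤ s ∧ ‖e‖ ≤ s⁻¹ ∧
      1 - p = c * e := by
  -- `cfc low c` projects onto the spectral subspace `|λ| < s` and `cfc inv c` inverts `c` on its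
  -- complement; these discontinuous functions are admissible because the spectrum is finite.
  set low : ℝ → ℝ := fun x => if |x| < s then 1 else 0
  set inv : ℝ → ℝ := fun x => if |x| < s then 0 else x⁻¹
  have hcont : ∀ f : ℝ → ℝ, ContinuousOn f (spectrum ℝ c) := fun f => hfin.continuousOn f
  have hmul : ∀ f : ℝ → ℝ, c * cfc f c = cfc (fun x => x * f x) c := fun f => by
    rw [cfc_mul _ _ c (hcont _) (hcont _), cfc_id' ℝ c]
  have hlow : ∀ x, ‖x * low x‖ ≤ s := fun x => by
    by_cases h : |x| < s
    · simpa [low, h] using h.le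
    · simp [low, h, hs.le]
  refine ⟨cfc low c, cfc inv c, cfc_predicate low c, ?_, ?_, ?_, ?_, ?_⟩
  · refine norm_cfc_le zero_le_one fun x _ => ?_
    by_cases h : |x| < s <;> simp [low, h]
  · rw [hmul]
    exact norm_cfc_le hs.le fun x _ => hlow x
  · rw [((Commute.refl c).cfc_real low).eq, hmul]
    exact norm_cfc_le hs.le fun x _ => hlow x
  · refine norm_cfc_le (inv_nonneg.2 hs.le) fun x _ => ?_
    by_cases h : |x| < s
    · simp [inv, h, hs.le]
    · simpa [inv, h] using inv_anti₀ hs (not_lt.1 h)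
  · have : (fun x => 1 - low x) = fun x => x * inv x := by
      funext x
      by_cases h : |x| < s
      · simp [low, inv, h]
      · have : x ≠ 0 := fun hx => h (by simpa [hx])
        simp [low, inv, h, this]
    rw [hmul, ← this, cfc_sub (fun _ => 1) low c (hcont _) (hcont _), cfc_const_one ℝ c]

theorem stmt_12_general {N : ℕ} (Ap Am : Matrix (Fin N) (Fin N) ℂ)
    (hp : IsSelfAdjoint Ap) (hm' : IsSelfAdjoint Am)
    (m ε : ℝ) (hnp : ‖Ap‖ ≤ m) (hnm : ‖Am‖ ≤ m)
    (h1 : ‖(Ap - Ap ^ 2) * (Ap - Am)‖ < m * ε)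
    (h2 : ‖(Am - Am ^ 2) * (Ap - Am)‖ < m * ε) :
    ‖(Ap - Ap ^ 2) - (Am - Am ^ 2)‖ < 2 * (m + 3) * Real.sqrt (m * ε) := by
  have hg : Ap - Ap ^ 2 - (Am - Am ^ 2) = (Ap - Am) - Ap * (Ap - Am) - (Ap - Am) * Am := by
    noncomm_ring
  have hb : IsSelfAdjoint (Ap - Ap ^ 2 - (Am - Am ^ 2)) :=
    (hp.sub (hp.pow 2)).sub (hm'.sub (hm'.pow 2))
  set b := Ap - Ap ^ 2 - (Am - Am ^ 2)
  set c := Ap - Am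
  set s := Real.sqrt (m * ε)
  have hs : 0 < s := Real.sqrt_pos.2 ((norm_nonneg _).trans_lt h1)
  have hbc : ‖b * c‖ < 2 * s ^ 2 := by
    rw [sub_mul, Real.sq_sqrt ((norm_nonneg _).trans h1.le)]
    linarith [norm_sub_le ((Ap - Ap ^ 2) * c) ((Am - Am ^ 2) * c)]
  obtain ⟨p, e, hpsa, hp1, hcp, hpc, he, hpe⟩ :=
    (hp.sub hm').exists_spectral_cut Matrix.finite_real_spectrum hs
  calc ‖b‖ ≤ ‖p * b * p‖ + 2 * ‖b * (1 - p)‖ := hb.norm_le_compression_add hpsa hp1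
    _ ≤ (1 + 2 * m) * s + 2 * (‖b * c‖ * s⁻¹) := by
        gcongr
        · rw [hg]
          exact norm_compression_sub_mul_sub_mul_le hp1 hnp hnm hcp hpc
        · rw [hpe, ← mul_assoc]
          exact (norm_mul_le _ _).trans (by gcongr)
    _ < (1 + 2 * m) * s + 2 * (2 * s ^ 2 * s⁻¹) := by gcongr
    _ < 2 * (m + 3) * s := by
        rw [sq, mul_assoc, mul_assoc s, mul_inv_cancel₀ hs.ne']
        linarith

/-- If `Ap`, `Am` are selfadjoint `N×N` matrices of norm at most `m` (with `m ≥ 1`) such that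
`‖(A± - A±²)(Ap - Am)‖ < mε` for both signs and `mε ≤ 1`, then with `g(t) = t - t²` one has
`‖g(Ap) - g(Am)‖ < 2(m+3)√(mε)`. The norm is the `L²` operator norm. -/
theorem stmt_12 {N : ℕ} (Ap Am : Matrix (Fin N) (Fin N) ℂ)
    (hp : IsSelfAdjoint Ap) (hm' : IsSelfAdjoint Am)
    (m ε : ℝ) (hm : 1 ≤ m) (hnp : ‖Ap‖ ≤ m) (hnm : ‖Am‖ ≤ m)
    (hme : m * ε ≤ 1)
    (h1 : ‖(Ap - Ap ^ 2) * (Ap - Am)‖ < m * ε)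
    (h2 : ‖(Am - Am ^ 2) * (Ap - Am)‖ < m * ε) :
    ‖(Ap - Ap ^ 2) - (Am - Am ^ 2)‖ < 2 * (m + 3) * Real.sqrt (m * ε) :=
  stmt_12_general Ap Am hp hm' m ε hnp hnm h1 h2
end

section
/- Let (φ_α)_{α∈Λ} be a partition of unity as above and g_{αβ} : X → U(N) continuous maps with g_{αβ} = g_{βα}⁻¹ satisfying the ε-almost-cocycle condition ‖g_{αβ}(x)g_{βγ}(x) - g_{αγ}(x)‖ < ε wherever defined. Then the block matrix A with A_{αβ} = φ_α φ_β g_{αβ} satisfies ‖A - A²‖ < mε, where m = |Λ|. -/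
/-! Write `A = (w_α w_γ g_{αγ})_{α,γ}` with `w = φ`. Because `Σ_β w_β² = 1`, the `(α, γ)` block of
`A - A²` is `w_α w_γ Σ_β w_β² (g_{αγ} - g_{αβ} g_{βγ})`, a convex combination of cocycle defects
(only the `β` with `w_β ≠ 0` contribute), scaled by `w_α w_γ ∈ [0, 1]`; so every block has norm
`< ε`. An `m × m` block matrix whose blocks have operator norm `≤ κ` has operator norm `≤ mκ`
(bound each block row of `Mx` by `κ Σ_γ ‖x_γ‖` and apply Cauchy–Schwarz), and finiteness of
`Λ` makes the bound strict. -/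

open scoped Matrix.Norms.L2Operator

theorem EuclideanSpace.norm_sq_eq_sum_norm_sq_curry {𝕜 ι n : Type*} [RCLike 𝕜] [Fintype ι]
    [Fintype n] (x : EuclideanSpace 𝕜 (ι × n)) :
    ‖x‖ ^ 2 = ∑ α, ‖(WithLp.toLp 2 fun i => x (α, i) : EuclideanSpace 𝕜 n)‖ ^ 2 := by
  simp only [EuclideanSpace.norm_sq_eq, Fintype.sum_prod_type]

theorem norm_sum_ofReal_smul_lt {𝕜 ι E : Type*} [RCLike 𝕜] [Fintype ι] [SeminormedAddCommGroup E]
    [NormedSpace 𝕜 E] {w : ι → ℝ} (hw0 : ∀ i, 0 ≤ w i) (hw1 : ∑ i, w i = 1) {d : ι → E} {ε : ℝ}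
    (hd : ∀ i, w i ≠ 0 → ‖d i‖ < ε) : ‖∑ i, (w i : 𝕜) • d i‖ < ε := by
  obtain ⟨i₀, -, hi₀⟩ := Finset.exists_ne_zero_of_sum_ne_zero (hw1.symm ▸ one_ne_zero)
  calc ‖∑ i, (w i : 𝕜) • d i‖ ≤ ∑ i, w i * ‖d i‖ := by
        refine (norm_sum_le _ _).trans_eq (Finset.sum_congr rfl fun i _ => ?_)
        rw [norm_smul, RCLike.norm_ofReal, abs_of_nonneg (hw0 i)]
    _ < ∑ i, w i * ε := by
        refine Finset.sum_lt_sum (fun i _ => ?_) ⟨i₀, Finset.mem_univ _, ?_⟩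
        · rcases eq_or_ne (w i) 0 with h | h
          · simp [h]
          · exact mul_le_mul_of_nonneg_left (hd i h).le (hw0 i)
        · exact mul_lt_mul_of_pos_left (hd i₀ hi₀) ((hw0 i₀).lt_of_ne' hi₀)
    _ = ε := by rw [← Finset.sum_mul, hw1, one_mul]

namespace Matrix

variable {𝕜 ι n : Type*}

section BlockNorm

variable [RCLike 𝕜] [Fintype ι] [Fintype n] [DecidableEq ι] [DecidableEq n]

theorem l2_opNorm_comp_le (B : Matrix ι ι (Matrix n n 𝕜)) {κ : ℝ} (hκ : 0 ≤ κ)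
    (hB : ∀ α γ, ‖B α γ‖ ≤ κ) : ‖comp ι ι n n 𝕜 B‖ ≤ Fintype.card ι * κ := by
  rw [l2_opNorm_def]
  refine ContinuousLinearMap.opNorm_le_bound _ (by positivity) fun x => ?_
  set m : ℝ := (Fintype.card ι : ℝ)
  let block (v : EuclideanSpace 𝕜 (ι × n)) (α : ι) : EuclideanSpace 𝕜 n :=
    WithLp.toLp 2 fun i => v (α, i)
  set y := (toEuclideanLin.trans LinearMap.toContinuousLinearMap) (comp ι ι n n 𝕜 B) x
  have hy : ∀ α, block y α = ∑ γ, (EuclideanSpace.equiv n 𝕜).symm (B α γ *ᵥ block x γ) := by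
    intro α
    ext i
    simp [y, block, mulVec, dotProduct, Fintype.sum_prod_type]
  have hyα : ∀ α, ‖block y α‖ ≤ κ * ∑ γ, ‖block x γ‖ := by
    intro α
    rw [hy, Finset.mul_sum]
    refine (norm_sum_le _ _).trans (Finset.sum_le_sum fun γ _ => ?_)
    exact (l2_opNorm_mulVec _ _).trans (mul_le_mul_of_nonneg_right (hB α γ) (norm_nonneg _))
  have hcs : (∑ γ, ‖block x γ‖) ^ 2 ≤ m * ‖x‖ ^ 2 := by
    rw [EuclideanSpace.norm_sq_eq_sum_norm_sq_curry x]
    simpa [m] using Finset.sum_mul_sq_le_sq_mul_sq Finset.univ (fun _ => (1 : ℝ))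
      (fun γ => ‖block x γ‖)
  have : ‖y‖ ^ 2 ≤ (m * κ * ‖x‖) ^ 2 :=
    calc ‖y‖ ^ 2 = ∑ α, ‖block y α‖ ^ 2 := EuclideanSpace.norm_sq_eq_sum_norm_sq_curry y
      _ ≤ ∑ _α : ι, (κ * ∑ γ, ‖block x γ‖) ^ 2 :=
        Finset.sum_le_sum fun α _ => pow_le_pow_left₀ (norm_nonneg _) (hyα α) 2
      _ = m * κ ^ 2 * (∑ γ, ‖block x γ‖) ^ 2 := by simp [m]; ring
      _ ≤ m * κ ^ 2 * (m * ‖x‖ ^ 2) := by gcongr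
      _ = (m * κ * ‖x‖) ^ 2 := by ring
  exact (sq_le_sq₀ (norm_nonneg _) (by positivity)).mp this

theorem l2_opNorm_comp_lt [Nonempty ι] (B : Matrix ι ι (Matrix n n 𝕜)) {κ : ℝ}
    (hB : ∀ α γ, ‖B α γ‖ < κ) : ‖comp ι ι n n 𝕜 B‖ < Fintype.card ι * κ := by
  let κ' := Finset.univ.sup' Finset.univ_nonempty fun p : ι × ι => ‖B p.1 p.2‖
  have hκ' : κ' < κ := (Finset.sup'_lt_iff _).mpr fun p _ => hB p.1 p.2
  have hB' : ∀ α γ, ‖B α γ‖ ≤ κ' := fun α γ =>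
    Finset.le_sup' (fun p : ι × ι => ‖B p.1 p.2‖) (Finset.mem_univ (α, γ))
  obtain ⟨α⟩ := ‹Nonempty ι›
  calc ‖comp ι ι n n 𝕜 B‖ ≤ Fintype.card ι * κ' :=
        l2_opNorm_comp_le B ((norm_nonneg _).trans (hB' α α)) hB'
    _ < Fintype.card ι * κ := by gcongr

end BlockNorm

section WeightedBlock

variable {S R : Type*} [CommRing S] [Ring R] [Algebra S R]

def weightedBlock (w : ι → S) (g : ι → ι → R) : Matrix ι ι R :=
  of fun α γ => (w α * w γ) • g α γ

theorem weightedBlock_sub_mul_self_apply [Fintype ι] {w : ι → S} (hw : ∑ β, w β ^ 2 = 1)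
    (g : ι → ι → R) (α γ : ι) :
    (weightedBlock w g - weightedBlock w g * weightedBlock w g) α γ =
      (w α * w γ) • ∑ β, w β ^ 2 • (g α γ - g α β * g β γ) := by
  have hsq : ∑ β, (weightedBlock w g α β * weightedBlock w g β γ) =
      (w α * w γ) • ∑ β, w β ^ 2 • (g α β * g β γ) := by
    simp only [weightedBlock, of_apply, smul_mul_smul_comm, Finset.smul_sum, smul_smul]
    exact Finset.sum_congr rfl fun β _ => by ring_nf
  simp only [sub_apply, mul_apply, hsq, smul_sub, Finset.sum_sub_distrib, ← Finset.sum_smul, hw,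
    one_smul]
  rfl

end WeightedBlock

theorem norm_weightedBlock_sub_mul_self_apply_lt {R : Type*} [RCLike 𝕜] [Fintype ι]
    [SeminormedRing R] [NormedAlgebra 𝕜 R] {w : ι → ℝ} (hw0 : ∀ i, 0 ≤ w i) (hw1 : ∀ i, w i ≤ 1)
    (hw : ∑ β, w β ^ 2 = 1) {g : ι → ι → R} {ε : ℝ}
    (hg : ∀ α β γ, w α ≠ 0 → w β ≠ 0 → w γ ≠ 0 → ‖g α β * g β γ - g α γ‖ < ε) (α γ : ι) :
    ‖(weightedBlock (fun i => (w i : 𝕜)) g -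
      weightedBlock (fun i => (w i : 𝕜)) g * weightedBlock (fun i => (w i : 𝕜)) g) α γ‖ < ε := by
  have hw𝕜 : ∑ β, (w β : 𝕜) ^ 2 = 1 := by exact_mod_cast congrArg ((↑) : ℝ → 𝕜) hw
  rw [weightedBlock_sub_mul_self_apply hw𝕜]
  by_cases hαγ : w α = 0 ∨ w γ = 0
  · obtain ⟨β, -, hβ⟩ := Finset.exists_ne_zero_of_sum_ne_zero (hw.symm ▸ one_ne_zero)
    replace hβ : w β ≠ 0 := pow_ne_zero_iff two_ne_zero |>.mp hβ
    have hε : 0 < ε := (norm_nonneg _).trans_lt (hg β β β hβ hβ hβ)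
    rcases hαγ with h | h <;> simpa [h] using hε
  push Not at hαγ
  have hαγ1 : ‖(w α : 𝕜) * w γ‖ ≤ 1 := by
    simpa [abs_of_nonneg (hw0 _)] using mul_le_one₀ (hw1 α) (hw0 γ) (hw1 γ)
  have hdefect : ∀ β, w β ^ 2 ≠ 0 → ‖g α γ - g α β * g β γ‖ < ε := fun β hβ => by
    rw [norm_sub_rev]
    exact hg α β γ hαγ.1 (pow_ne_zero_iff two_ne_zero |>.mp hβ) hαγ.2
  calc ‖((w α : 𝕜) * w γ) • ∑ β, (w β : 𝕜) ^ 2 • (g α γ - g α β * g β γ)‖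
      ≤ ‖∑ β, ((w β ^ 2 : ℝ) : 𝕜) • (g α γ - g α β * g β γ)‖ := by
        rw [norm_smul]; push_cast; exact mul_le_of_le_one_left (norm_nonneg _) hαγ1
    _ < ε := norm_sum_ofReal_smul_lt (fun β => sq_nonneg (w β)) hw hdefect

end Matrix

theorem stmt_17_general {N : ℕ} {X : Type*} [TopologicalSpace X]
    {Λ : Type*} [Fintype Λ] [DecidableEq Λ]
    (φ : Λ → C(X, ℝ)) (hφ0 : ∀ α x, 0 ≤ φ α x) (hφ1 : ∀ α x, φ α x ≤ 1)
    (hsum : ∀ x, ∑ β, (φ β x) ^ 2 = 1)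
    (ε : ℝ)
    (g : Λ → Λ → X → Matrix (Fin N) (Fin N) ℂ)
    (hgac : ∀ α β γ x, φ α x ≠ 0 → φ β x ≠ 0 → φ γ x ≠ 0 →
      ‖g α β x * g β γ x - g α γ x‖ < ε)
    (A : X → Matrix (Λ × Fin N) (Λ × Fin N) ℂ)
    (hA : ∀ x, A x = Matrix.of fun p q : Λ × Fin N =>
      ((φ p.1 x * φ q.1 x : ℝ) : ℂ) * g p.1 q.1 x p.2 q.2) :
    ∀ x, ‖A x - A x * A x‖ < (Fintype.card Λ : ℝ) * ε := by
  intro x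
  obtain ⟨β₀, -, -⟩ := Finset.exists_ne_zero_of_sum_ne_zero ((hsum x).symm ▸ one_ne_zero)
  have : Nonempty Λ := ⟨β₀⟩
  have hAw : A x = Matrix.compRingEquiv Λ (Fin N) ℂ
      (Matrix.weightedBlock (fun β => (φ β x : ℂ)) fun α γ => g α γ x) := by
    ext p q
    simp [hA, Matrix.weightedBlock]
  rw [hAw, ← map_mul, ← map_sub]
  exact Matrix.l2_opNorm_comp_lt _ <| Matrix.norm_weightedBlock_sub_mul_self_apply_lt
    (hφ0 · x) (hφ1 · x) (hsum x) (hgac · · · x)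

/-- Let `(φ_α²)` be a partition of unity (`0 ≤ φ_α ≤ 1`, `Σ_β φ_β² = 1`) and
`g_{αβ} : X → U(N)` unitary-valued maps with `g_{αβ} = g_{βα}⁻¹` satisfying the
`ε`-almost-cocycle condition `‖g_{αβ}(x) g_{βγ}(x) - g_{αγ}(x)‖ < ε` wherever defined.
Then the block matrix `A` with `A_{αβ} = φ_α φ_β g_{αβ}` satisfies `‖A - A²‖ < mε`,
where `m = |Λ|`, pointwise (hence in supremum norm).  Norms are `L²` operator norms. -/
theorem stmt_17 {N : ℕ} {X : Type*} [TopologicalSpace X] [CompactSpace X]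
    {Λ : Type*} [Fintype Λ] [DecidableEq Λ]
    (φ : Λ → C(X, ℝ)) (hφ0 : ∀ α x, 0 ≤ φ α x) (hφ1 : ∀ α x, φ α x ≤ 1)
    (hsum : ∀ x, ∑ β, (φ β x) ^ 2 = 1)
    (ε : ℝ)
    (g : Λ → Λ → X → Matrix (Fin N) (Fin N) ℂ)
    (hgu : ∀ α β x, φ α x ≠ 0 → φ β x ≠ 0 → g α β x ∈ Matrix.unitaryGroup (Fin N) ℂ)
    (hgsym : ∀ α β x, φ α x ≠ 0 → φ β x ≠ 0 → g α β x = star (g β α x))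
    (hgac : ∀ α β γ x, φ α x ≠ 0 → φ β x ≠ 0 → φ γ x ≠ 0 →
      ‖g α β x * g β γ x - g α γ x‖ < ε)
    (A : X → Matrix (Λ × Fin N) (Λ × Fin N) ℂ)
    (hA : ∀ x, A x = Matrix.of fun p q : Λ × Fin N =>
      ((φ p.1 x * φ q.1 x : ℝ) : ℂ) * g p.1 q.1 x p.2 q.2) :
    ∀ x, ‖A x - A x * A x‖ < (Fintype.card Λ : ℝ) * ε :=
  stmt_17_general φ hφ0 hφ1 hsum ε g hgac A hA
end

section
/- Let g⁺_{αβ}, g⁻_{αβ} : X → U(N) be an ε-generalized pair of cocycles (i.e., ‖(g±_{αβ}g±_{βγ} - g±_{αγ})(g⁺_{γδ} - g⁻_{γδ})‖ < ε pointwise for both signs, and g±_{αβ} = (g±_{βα})⁻¹), and let (φ_α²) be a partition of unity as above. Define A± by (A±)_{αβ} = φ_α φ_β g±_{αβ}. Then A₊ and A₋ are selfadjoint and ‖(A± - A±²)(A₊ - A₋)‖ < mε for both signs, where m = |Λ|. -/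
/-
View `A = (f_α f_β g_{αβ})` as a `Λ × Λ` matrix of `N × N` blocks. Because `∑ f_β² = 1`, the
`(α, γ)` block of `A - A²` is `∑_β f_α f_β² f_γ (g_{αγ} - g_{αβ} g_{βγ})`, so each block of
`(A - A²)(A₊ - A₋)` is a combination, with weights `f_α f_β² f_γ² f_δ`, of the defects
`(g_{αβ} g_{βγ} - g_{αγ})(g⁺_{γδ} - g⁻_{γδ})` with all four `f`'s nonzero. The operator norm of a
block matrix is at most the sum of the norms of its blocks, which bounds the whole product by
`(∑ f_α)² ε ≤ m ε` (Cauchy–Schwarz). Strictness holds because the finitely many defects are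
uniformly below `ε`.
-/

open scoped Matrix.Norms.L2Operator

lemma Finite.exists_lt_forall_le {ι α : Type*} [Finite ι] [LinearOrder α] [NoMinOrder α]
    {P : ι → Prop} {a : ι → α} {ε : α} (h : ∀ i, P i → a i < ε) :
    ∃ c < ε, ∀ i, P i → a i ≤ c := by
  rcases isEmpty_or_nonempty {i // P i} with hP | hP
  · obtain ⟨c, hc⟩ := exists_lt ε
    exact ⟨c, hc, fun i hi => (hP.false ⟨i, hi⟩).elim⟩
  · obtain ⟨i₀, hi₀⟩ := Finite.exists_max fun i : {i // P i} => a i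
    exact ⟨a i₀, h i₀ i₀.2, fun i hi => hi₀ ⟨i, hi⟩⟩

namespace Matrix

section BlockNorm

variable {𝕜 Λ : Type*} (n : Type*) [RCLike 𝕜] [Fintype Λ] [DecidableEq Λ] [Fintype n]
  [DecidableEq n]

variable (𝕜) in
def blockInclusion (α : Λ) : Matrix (Λ × n) n 𝕜 :=
  of fun p i => if p = (α, i) then 1 else 0

lemma blockInclusion_conjTranspose_mul_self (α : Λ) :
    (blockInclusion 𝕜 n α)ᴴ * blockInclusion 𝕜 n α = 1 := by
  ext i j
  simp [blockInclusion, mul_apply, one_apply, eq_comm]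

lemma l2_opNorm_blockInclusion_le (α : Λ) : ‖blockInclusion 𝕜 n α‖ ≤ 1 := by
  have h : ‖blockInclusion 𝕜 n α‖ * ‖blockInclusion 𝕜 n α‖ ≤ 1 := by
    rw [← l2_opNorm_conjTranspose_mul_self, blockInclusion_conjTranspose_mul_self,
      ← diagonal_one, l2_opNorm_diagonal]
    exact pi_norm_const_le 1 |>.trans norm_one.le
  nlinarith [norm_nonneg (blockInclusion 𝕜 n α)]

variable {n}

lemma comp_eq_sum_blockInclusion (P : Matrix Λ Λ (Matrix n n 𝕜)) :
    comp Λ Λ n n 𝕜 P = ∑ α, ∑ δ, blockInclusion 𝕜 n α * P α δ * (blockInclusion 𝕜 n δ)ᴴ := by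
  ext p q
  simp [blockInclusion, sum_apply, mul_apply, Prod.ext_iff, ite_and, apply_ite (starRingEnd 𝕜)]

lemma l2_opNorm_comp_le_s18 (P : Matrix Λ Λ (Matrix n n 𝕜)) :
    ‖comp Λ Λ n n 𝕜 P‖ ≤ ∑ α, ∑ δ, ‖P α δ‖ := by
  rw [comp_eq_sum_blockInclusion]
  refine (norm_sum_le _ _).trans <| Finset.sum_le_sum fun α _ =>
    (norm_sum_le _ _).trans <| Finset.sum_le_sum fun δ _ => ?_
  calc ‖blockInclusion 𝕜 n α * P α δ * (blockInclusion 𝕜 n δ)ᴴ‖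
      ≤ ‖blockInclusion 𝕜 n α‖ * ‖P α δ‖ * ‖blockInclusion 𝕜 n δ‖ := by
        rw [← l2_opNorm_conjTranspose (blockInclusion 𝕜 n δ)]
        exact (l2_opNorm_mul _ _).trans (by gcongr; exact l2_opNorm_mul _ _)
    _ ≤ 1 * ‖P α δ‖ * 1 := by
        gcongr
        exacts [l2_opNorm_blockInclusion_le n α, l2_opNorm_blockInclusion_le n δ]
    _ = ‖P α δ‖ := by ring

end BlockNorm

section WeightedBlocks

variable {Λ n : Type*}

def weightedBlocks (f : Λ → ℝ) (g : Λ → Λ → Matrix n n ℂ) : Matrix Λ Λ (Matrix n n ℂ) :=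
  of fun α β => ((f α * f β : ℝ) : ℂ) • g α β

variable (f : Λ → ℝ) (g h : Λ → Λ → Matrix n n ℂ)

lemma weightedBlocks_sub : weightedBlocks f g - weightedBlocks f h = weightedBlocks f (g - h) := by
  ext1 α β
  simp [weightedBlocks, smul_sub]

variable [Fintype Λ] [Fintype n]

lemma isSelfAdjoint_comp_weightedBlocks
    (hsym : ∀ α β, f α ≠ 0 → f β ≠ 0 → g α β = star (g β α)) :
    IsSelfAdjoint (compRingEquiv Λ n ℂ (weightedBlocks f g)) := by
  ext ⟨α, i⟩ ⟨β, j⟩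
  by_cases hα : f α = 0
  · simp [weightedBlocks, compRingEquiv, hα]
  by_cases hβ : f β = 0
  · simp [weightedBlocks, compRingEquiv, hβ]
  simp [weightedBlocks, compRingEquiv, hsym α β hα hβ, mul_comm]

variable [DecidableEq Λ] [DecidableEq n]

lemma weightedBlocks_sub_sq (hsum : ∑ β, f β ^ 2 = 1) :
    weightedBlocks f g - weightedBlocks f g ^ 2 =
      of fun α γ => ∑ β, ((f α * f β ^ 2 * f γ : ℝ) : ℂ) • (g α γ - g α β * g β γ) := by
  ext1 α γ
  have hweight : ((f α * f γ : ℝ) : ℂ) = ∑ β, ((f α * f β ^ 2 * f γ : ℝ) : ℂ) := by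
    rw [← Complex.ofReal_sum, ← Finset.sum_mul, ← Finset.mul_sum, hsum, mul_one]
  simp only [weightedBlocks, sq, sub_apply, mul_apply, of_apply, smul_sub, Finset.sum_sub_distrib,
    smul_mul_smul_comm, hweight, Finset.sum_smul]
  congr 1
  refine Finset.sum_congr rfl fun β _ => congrArg (· • _) ?_
  push_cast
  ring

lemma l2_opNorm_comp_weightedBlocks_sub_sq_mul_le (hf0 : ∀ α, 0 ≤ f α)
    (hsum : ∑ β, f β ^ 2 = 1) (c : ℝ)
    (hc : ∀ α β γ δ, f α ≠ 0 → f β ≠ 0 → f γ ≠ 0 → f δ ≠ 0 →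
      ‖(g α β * g β γ - g α γ) * h γ δ‖ ≤ c) :
    ‖(compRingEquiv Λ n ℂ (weightedBlocks f g) - compRingEquiv Λ n ℂ (weightedBlocks f g) ^ 2) *
      compRingEquiv Λ n ℂ (weightedBlocks f h)‖ ≤ (∑ α, f α) ^ 2 * c := by
  have hterm : ∀ α β γ δ, ‖((f α * f β ^ 2 * f γ : ℝ) : ℂ) • (g α γ - g α β * g β γ) *
      ((f γ * f δ : ℝ) : ℂ) • h γ δ‖ ≤ f α * f δ * c * (f β ^ 2 * f γ ^ 2) := by
    intro α β γ δ
    have hw0 : 0 ≤ f α * f β ^ 2 * f γ * (f γ * f δ) :=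
      mul_nonneg (mul_nonneg (mul_nonneg (hf0 α) (sq_nonneg _)) (hf0 γ))
        (mul_nonneg (hf0 γ) (hf0 δ))
    rw [smul_mul_smul_comm, norm_smul, ← neg_sub, neg_mul, norm_neg, ← Complex.ofReal_mul,
      Complex.norm_real, Real.norm_of_nonneg hw0]
    by_cases hw : f α = 0 ∨ f β = 0 ∨ f γ = 0 ∨ f δ = 0
    · rcases hw with hw | hw | hw | hw <;> simp [hw]
    push Not at hw
    obtain ⟨hα, hβ, hγ, hδ⟩ := hw
    calc _ ≤ f α * f β ^ 2 * f γ * (f γ * f δ) * c :=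
          mul_le_mul_of_nonneg_left (hc α β γ δ hα hβ hγ hδ) hw0
      _ = _ := by ring
  have hblock : ∀ α δ, ‖((of fun α γ => ∑ β, ((f α * f β ^ 2 * f γ : ℝ) : ℂ) •
      (g α γ - g α β * g β γ)) * weightedBlocks f h) α δ‖ ≤ f α * f δ * c := by
    intro α δ
    simp only [mul_apply, of_apply, weightedBlocks, Finset.sum_mul]
    calc _ ≤ ∑ γ, ∑ β, f α * f δ * c * (f β ^ 2 * f γ ^ 2) :=
          (norm_sum_le _ _).trans <| Finset.sum_le_sum fun γ _ =>
            (norm_sum_le _ _).trans <| Finset.sum_le_sum fun β _ => hterm α β γ δ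
      _ = f α * f δ * c := by
          simp only [← Finset.mul_sum, ← Finset.sum_mul, hsum, one_mul, mul_one]
  rw [← map_pow, ← map_sub, ← map_mul, weightedBlocks_sub_sq f g hsum]
  calc _ ≤ ∑ α, ∑ δ, f α * f δ * c :=
        (l2_opNorm_comp_le_s18 _).trans <| Finset.sum_le_sum fun α _ =>
          Finset.sum_le_sum fun δ _ => hblock α δ
    _ = (∑ α, f α) ^ 2 * c := by
        rw [sq, Finset.sum_mul_sum, Finset.sum_mul]
        simp_rw [Finset.sum_mul]

lemma l2_opNorm_comp_weightedBlocks_sub_sq_mul_lt (hf0 : ∀ α, 0 ≤ f α)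
    (hsum : ∑ β, f β ^ 2 = 1) (ε : ℝ)
    (hε : ∀ α β γ δ, f α ≠ 0 → f β ≠ 0 → f γ ≠ 0 → f δ ≠ 0 →
      ‖(g α β * g β γ - g α γ) * h γ δ‖ < ε) :
    ‖(compRingEquiv Λ n ℂ (weightedBlocks f g) - compRingEquiv Λ n ℂ (weightedBlocks f g) ^ 2) *
      compRingEquiv Λ n ℂ (weightedBlocks f h)‖ < Fintype.card Λ * ε := by
  obtain ⟨α₀, hα₀⟩ : ∃ α, f α ≠ 0 := by
    by_contra! h0
    simp [h0] at hsum
  obtain ⟨c, hcε, hc⟩ := Finite.exists_lt_forall_le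
    (P := fun t : Λ × Λ × Λ × Λ => f t.1 ≠ 0 ∧ f t.2.1 ≠ 0 ∧ f t.2.2.1 ≠ 0 ∧ f t.2.2.2 ≠ 0)
    (a := fun t => ‖(g t.1 t.2.1 * g t.2.1 t.2.2.1 - g t.1 t.2.2.1) * h t.2.2.1 t.2.2.2‖)
    fun t ht => hε _ _ _ _ ht.1 ht.2.1 ht.2.2.1 ht.2.2.2
  have hc0 : 0 ≤ c := (norm_nonneg _).trans (hc (α₀, α₀, α₀, α₀) ⟨hα₀, hα₀, hα₀, hα₀⟩)
  have hcard : (∑ α, f α) ^ 2 ≤ Fintype.card Λ := by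
    simpa [hsum] using sq_sum_le_card_mul_sum_sq (s := Finset.univ) (f := f)
  have hcard_pos : (0 : ℝ) < Fintype.card Λ := by
    have : Nonempty Λ := ⟨α₀⟩
    exact_mod_cast Fintype.card_pos
  calc _ ≤ (∑ α, f α) ^ 2 * c := l2_opNorm_comp_weightedBlocks_sub_sq_mul_le f g h hf0 hsum c
          fun α β γ δ hα hβ hγ hδ => hc (α, β, γ, δ) ⟨hα, hβ, hγ, hδ⟩
    _ ≤ Fintype.card Λ * c := by gcongr
    _ < Fintype.card Λ * ε := by gcongr

end WeightedBlocks
end Matrix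

theorem stmt_18_general {N : ℕ} {X : Type*} [TopologicalSpace X]
    {Λ : Type*} [Fintype Λ] [DecidableEq Λ]
    (φ : Λ → C(X, ℝ)) (hφ0 : ∀ α x, 0 ≤ φ α x)
    (hsum : ∀ x, ∑ β, (φ β x) ^ 2 = 1)
    (ε : ℝ)
    (gp gm : Λ → Λ → X → Matrix (Fin N) (Fin N) ℂ)
    (hgsymp : ∀ α β x, φ α x ≠ 0 → φ β x ≠ 0 → gp α β x = star (gp β α x))
    (hgsymm : ∀ α β x, φ α x ≠ 0 → φ β x ≠ 0 → gm α β x = star (gm β α x))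
    (hgenp : ∀ α β γ δ x, φ α x ≠ 0 → φ β x ≠ 0 → φ γ x ≠ 0 → φ δ x ≠ 0 →
      ‖(gp α β x * gp β γ x - gp α γ x) * (gp γ δ x - gm γ δ x)‖ < ε)
    (hgenm : ∀ α β γ δ x, φ α x ≠ 0 → φ β x ≠ 0 → φ γ x ≠ 0 → φ δ x ≠ 0 →
      ‖(gm α β x * gm β γ x - gm α γ x) * (gp γ δ x - gm γ δ x)‖ < ε)
    (Ap Am : X → Matrix (Λ × Fin N) (Λ × Fin N) ℂ)
    (hAp : ∀ x, Ap x = Matrix.of fun p q : Λ × Fin N =>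
      ((φ p.1 x * φ q.1 x : ℝ) : ℂ) * gp p.1 q.1 x p.2 q.2)
    (hAm : ∀ x, Am x = Matrix.of fun p q : Λ × Fin N =>
      ((φ p.1 x * φ q.1 x : ℝ) : ℂ) * gm p.1 q.1 x p.2 q.2) :
    ∀ x, IsSelfAdjoint (Ap x) ∧ IsSelfAdjoint (Am x) ∧
      ‖(Ap x - (Ap x) ^ 2) * (Ap x - Am x)‖ < (Fintype.card Λ : ℝ) * ε ∧
      ‖(Am x - (Am x) ^ 2) * (Ap x - Am x)‖ < (Fintype.card Λ : ℝ) * ε := by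
  intro x
  have hp : Ap x =
      Matrix.compRingEquiv Λ (Fin N) ℂ (Matrix.weightedBlocks (φ · x) (gp · · x)) := hAp x
  have hm : Am x =
      Matrix.compRingEquiv Λ (Fin N) ℂ (Matrix.weightedBlocks (φ · x) (gm · · x)) := hAm x
  have hpm : Ap x - Am x = Matrix.compRingEquiv Λ (Fin N) ℂ
      (Matrix.weightedBlocks (φ · x) fun α β => gp α β x - gm α β x) := by
    rw [hp, hm, ← map_sub, Matrix.weightedBlocks_sub]
    rfl
  rw [hpm, hp, hm]
  exact ⟨Matrix.isSelfAdjoint_comp_weightedBlocks _ _ fun α β => hgsymp α β x,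
    Matrix.isSelfAdjoint_comp_weightedBlocks _ _ fun α β => hgsymm α β x,
    Matrix.l2_opNorm_comp_weightedBlocks_sub_sq_mul_lt _ _ _ (hφ0 · x) (hsum x) ε
      fun α β γ δ => hgenp α β γ δ x,
    Matrix.l2_opNorm_comp_weightedBlocks_sub_sq_mul_lt _ _ _ (hφ0 · x) (hsum x) ε
      fun α β γ δ => hgenm α β γ δ x⟩

/-- Let `g⁺`, `g⁻` be an `ε`-generalized pair of cocycles:
`‖(g±_{αβ} g±_{βγ} - g±_{αγ})(g⁺_{γδ} - g⁻_{γδ})‖ < ε` pointwise for both signs, with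
`g±_{αβ} = (g±_{βα})⁻¹` unitary-valued, and let `(φ_α²)` be a partition of unity.
Define `A±` by `(A±)_{αβ} = φ_α φ_β g±_{αβ}`.  Then `A₊` and `A₋` are selfadjoint and
`‖(A± - A±²)(A₊ - A₋)‖ < mε` for both signs, where `m = |Λ|`, pointwise (hence in
supremum norm).  Norms are `L²` operator norms. -/
theorem stmt_18 {N : ℕ} {X : Type*} [TopologicalSpace X] [CompactSpace X]
    {Λ : Type*} [Fintype Λ] [DecidableEq Λ]
    (φ : Λ → C(X, ℝ)) (hφ0 : ∀ α x, 0 ≤ φ α x) (hφ1 : ∀ α x, φ α x ≤ 1)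
    (hsum : ∀ x, ∑ β, (φ β x) ^ 2 = 1)
    (ε : ℝ)
    (gp gm : Λ → Λ → X → Matrix (Fin N) (Fin N) ℂ)
    (hgup : ∀ α β x, φ α x ≠ 0 → φ β x ≠ 0 → gp α β x ∈ Matrix.unitaryGroup (Fin N) ℂ)
    (hgum : ∀ α β x, φ α x ≠ 0 → φ β x ≠ 0 → gm α β x ∈ Matrix.unitaryGroup (Fin N) ℂ)
    (hgsymp : ∀ α β x, φ α x ≠ 0 → φ β x ≠ 0 → gp α β x = star (gp β α x))
    (hgsymm : ∀ α β x, φ α x ≠ 0 → φ β x ≠ 0 → gm α β x = star (gm β α x))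
    (hgenp : ∀ α β γ δ x, φ α x ≠ 0 → φ β x ≠ 0 → φ γ x ≠ 0 → φ δ x ≠ 0 →
      ‖(gp α β x * gp β γ x - gp α γ x) * (gp γ δ x - gm γ δ x)‖ < ε)
    (hgenm : ∀ α β γ δ x, φ α x ≠ 0 → φ β x ≠ 0 → φ γ x ≠ 0 → φ δ x ≠ 0 →
      ‖(gm α β x * gm β γ x - gm α γ x) * (gp γ δ x - gm γ δ x)‖ < ε)
    (Ap Am : X → Matrix (Λ × Fin N) (Λ × Fin N) ℂ)
    (hAp : ∀ x, Ap x = Matrix.of fun p q : Λ × Fin N =>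
      ((φ p.1 x * φ q.1 x : ℝ) : ℂ) * gp p.1 q.1 x p.2 q.2)
    (hAm : ∀ x, Am x = Matrix.of fun p q : Λ × Fin N =>
      ((φ p.1 x * φ q.1 x : ℝ) : ℂ) * gm p.1 q.1 x p.2 q.2) :
    ∀ x, IsSelfAdjoint (Ap x) ∧ IsSelfAdjoint (Am x) ∧
      ‖(Ap x - (Ap x) ^ 2) * (Ap x - Am x)‖ < (Fintype.card Λ : ℝ) * ε ∧
      ‖(Am x - (Am x) ^ 2) * (Ap x - Am x)‖ < (Fintype.card Λ : ℝ) * ε :=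
  stmt_18_general φ hφ0 hsum ε gp gm hgsymp hgsymm hgenp hgenm Ap Am hAp hAm
end
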